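/- arXiv:2301.02628 — 7 statements merged into one kernel-verified Lean document; each statement's English description precedes it below -/
import Mathlib

section
/- Every finite signed subset S of the integers (a set containing no pair {x, -x}) is the pinnacle set of some signed permutation; specifically, if m = max{|s| : s ∈ S}, then there exists w in the hyperoctahedral group B_{2m+1} whose pinnacle set equals S. -/
/-- The pinnacle set of a word `w : Fin n → ℤ`: values `w i` (for `0 < i < n-1`)
strictly larger than both neighbors. -/
def PinSet (n : ℕ) (w : Fin n → ℤ) : Set ℤ :=
  {x | ∃ (i : ℕ) (h0 : 0 < i) (h2 : i + 1 < n),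
    w ⟨i, by omega⟩ = x ∧ w ⟨i - 1, by omega⟩ < w ⟨i, by omega⟩ ∧
      w ⟨i + 1, h2⟩ < w ⟨i, by omega⟩}

/-- `w : Fin n → ℤ` is the one-line notation of a signed permutation of rank `n`:
the absolute values of its entries are distinct elements of `{1,...,n}`
(hence a bijection onto `{1,...,n}`). -/
def IsSignedPerm (n : ℕ) (w : Fin n → ℤ) : Prop :=
  (∀ i, 1 ≤ |w i| ∧ |w i| ≤ (n : ℤ)) ∧ Function.Injective fun i => |w i|

/-- `S` is an admissible pinnacle set of the hyperoctahedral group `B_n`. -/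
def APSB (n : ℕ) (S : Finset ℤ) : Prop :=
  ∃ w : Fin n → ℤ, IsSignedPerm n w ∧ PinSet n w = ↑S

/-- `S` is an admissible pinnacle set of the type `D` group `D_n`
(signed permutations with an even number of negative one-line entries). -/
def APSD (n : ℕ) (S : Finset ℤ) : Prop :=
  ∃ w : Fin n → ℤ, IsSignedPerm n w ∧
    Even (Finset.univ.filter fun i => w i < 0).card ∧ PinSet n w = ↑S

/-- `S` is an admissible pinnacle set of the symmetric group `S_n`
(an unsigned permutation is a signed permutation with all entries positive). -/
def APSA (n : ℕ) (S : Finset ℤ) : Prop :=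
  ∃ w : Fin n → ℤ, IsSignedPerm n w ∧ (∀ i, 0 < w i) ∧ PinSet n w = ↑S

/-- `T` is an admissible pinnacle set of the totally ordered finite set `X ⊆ ℤ`:
it is the pinnacle set of some arrangement of the elements of `X`. -/
def APSOn (X : Finset ℤ) (T : Finset ℤ) : Prop :=
  ∃ w : Fin X.card → ℤ, Function.Injective w ∧ (∀ i, w i ∈ X) ∧
    PinSet X.card w = ↑T

/-!
Write `k = #S` and choose any `n > m + k`, where `|s| ≤ m` on `S`. Place the elements of `S`, in
increasing order, at the positions `1, 3, …, 2k-1` and the values `-n, -(n-1), …, -(n-k)` at the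
positions `0, 2, …, 2k`. These are below every element of `S`, so among the first `2k+1` entries
the pinnacles are exactly the elements of `S`. The unused absolute values, all at most `n-k-1`,
are then appended with positive sign in increasing order, which creates no new pinnacle. For
`n = 2m+1` the condition `n > m + k` is `k ≤ m`, which holds because `s ↦ |s|` is injective on
a signed set.
-/

/-- The `j`-th smallest element of `T` (counting from `0`), and `0` once `j` is out of range. -/
def sortedGet (T : Finset ℤ) (j : ℕ) : ℤ := T.sort.getD j 0

theorem sortedGet_mem {T : Finset ℤ} {j : ℕ} (hj : j < T.card) : sortedGet T j ∈ T := by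
  rw [sortedGet, List.getD_eq_getElem _ _ (by simpa using hj)]
  exact (Finset.mem_sort (· ≤ ·)).1 (List.getElem_mem _)

theorem sortedGet_lt_sortedGet {T : Finset ℤ} {a b : ℕ} (hab : a < b) (hb : b < T.card) :
    sortedGet T a < sortedGet T b := by
  rw [sortedGet, sortedGet, List.getD_eq_getElem _ _ (by simp; omega),
    List.getD_eq_getElem _ _ (by simpa using hb)]
  exact (Finset.sortedLT_sort T).strictMono_get (show (⟨a, _⟩ : Fin _) < ⟨b, _⟩ from hab)

theorem exists_sortedGet_eq {T : Finset ℤ} {x : ℤ} (hx : x ∈ T) :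
    ∃ j < T.card, sortedGet T j = x := by
  obtain ⟨j, hj, rfl⟩ := List.getElem_of_mem ((Finset.mem_sort (· ≤ ·)).2 hx)
  refine ⟨j, by simpa using hj, ?_⟩
  rw [sortedGet, List.getD_eq_getElem]

theorem nat_cases_zigzag (k i : ℕ) :
    (∃ j < k, i = 2 * j + 1) ∨ (∃ j ≤ k, i = 2 * j) ∨ ∃ j, i = 2 * k + 1 + j := by
  rcases Nat.even_or_odd' i with ⟨j, rfl | rfl⟩
  · by_cases hj : j ≤ k
    · exact Or.inr (Or.inl ⟨j, hj, rfl⟩)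
    · exact Or.inr (Or.inr ⟨2 * (j - k) - 1, by omega⟩)
  · by_cases hj : j < k
    · exact Or.inl ⟨j, hj, rfl⟩
    · exact Or.inr (Or.inr ⟨2 * (j - k), by omega⟩)

theorem pinSet_eq_of_zigzag_of_increasing {n k : ℕ} {f : ℕ → ℤ} (hkn : 2 * k < n)
    (hvalley : ∀ i ≤ k, ∀ j < k, f (2 * i) < f (2 * j + 1))
    (hinc : ∀ i, 2 * k < i → i + 1 < n → f i < f (i + 1)) :
    PinSet n (fun i => f i) = {x | ∃ j < k, f (2 * j + 1) = x} := by
  ext x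
  constructor
  · rintro ⟨i, hi, hin, rfl, hleft, hright⟩
    rcases nat_cases_zigzag k i with ⟨j, hj, rfl⟩ | ⟨j, hj, rfl⟩ | ⟨j, rfl⟩
    · exact ⟨j, hj, rfl⟩
    · have hprev : 2 * j - 1 = 2 * (j - 1) + 1 := by omega
      simp only [hprev] at hleft
      exact absurd hleft (hvalley j hj (j - 1) (by omega)).not_gt
    · exact absurd hright (hinc _ (by omega) hin).not_gt
  · rintro ⟨j, hj, rfl⟩
    have hnext : 2 * j + 1 + 1 = 2 * (j + 1) := by omega
    refine ⟨2 * j + 1, by omega, by omega, rfl, hvalley j hj.le j hj, ?_⟩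
    simp only [hnext]
    exact hvalley (j + 1) hj j (by omega)

theorem isSignedPerm_of_forall_exists_abs_eq {n : ℕ} {w : Fin n → ℤ}
    (hbound : ∀ i, 1 ≤ |w i| ∧ |w i| ≤ n) (hsurj : ∀ v : ℤ, 1 ≤ v → v ≤ n → ∃ i, |w i| = v) :
    IsSignedPerm n w := by
  classical
  refine ⟨hbound, fun a b hab => ?_⟩
  have himage : Finset.univ.image (fun i => |w i|) = Finset.Icc 1 (n : ℤ) := by
    ext v
    simp only [Finset.mem_image, Finset.mem_univ, true_and, Finset.mem_Icc]
    exact ⟨by rintro ⟨i, rfl⟩; exact hbound i, fun ⟨h1, h2⟩ => hsurj v h1 h2⟩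
  have hcard : (Finset.univ.image fun i => |w i|).card = Fintype.card (Fin n) := by
    simp [himage]
  exact Finset.card_image_iff.1 hcard (Finset.mem_univ a) (Finset.mem_univ b) hab

section SignedSet

variable {S : Finset ℤ} {m : ℕ}

theorem abs_injOn_of_signed (hS : ∀ x ∈ S, -x ∉ S) : Set.InjOn (|·|) (S : Set ℤ) := by
  intro a ha b hb hab
  rcases abs_eq_abs.1 hab with h | rfl
  · exact h
  · exact absurd ha (hS b hb)

theorem card_abs_image_of_signed (hS : ∀ x ∈ S, -x ∉ S) : (S.image (|·|)).card = S.card :=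
  Finset.card_image_of_injOn (abs_injOn_of_signed hS)

theorem one_le_abs_of_signed (hS : ∀ x ∈ S, -x ∉ S) {s : ℤ} (hs : s ∈ S) : 1 ≤ |s| :=
  Int.one_le_abs fun h => hS s hs (by simpa [h] using hs)

theorem abs_image_subset_Icc (hS : ∀ x ∈ S, -x ∉ S) (hm : ∀ s ∈ S, |s| ≤ m) :
    S.image (|·|) ⊆ Finset.Icc 1 (m : ℤ) := by
  simp only [Finset.subset_iff, Finset.mem_image, Finset.mem_Icc]
  rintro _ ⟨s, hs, rfl⟩
  exact ⟨one_le_abs_of_signed hS hs, hm s hs⟩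

theorem card_le_of_signed (hS : ∀ x ∈ S, -x ∉ S) (hm : ∀ s ∈ S, |s| ≤ m) : S.card ≤ m := by
  simpa [card_abs_image_of_signed hS] using Finset.card_le_card (abs_image_subset_Icc hS hm)

end SignedSet

section Construction

variable {S : Finset ℤ} {m n : ℕ}

noncomputable def tailSet (S : Finset ℤ) (n : ℕ) : Finset ℤ :=
  Finset.Icc 1 ((n : ℤ) - S.card - 1) \ S.image (|·|)

noncomputable def signedPinWord (S : Finset ℤ) (n i : ℕ) : ℤ :=
  if i < 2 * S.card ∧ i % 2 = 1 then sortedGet S (i / 2)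
  else if i ≤ 2 * S.card then ((i / 2 : ℕ) : ℤ) - n
  else sortedGet (tailSet S n) (i - (2 * S.card + 1))

theorem signedPinWord_odd {j : ℕ} (hj : j < S.card) :
    signedPinWord S n (2 * j + 1) = sortedGet S j := by
  rw [signedPinWord, if_pos ⟨by omega, by omega⟩]
  congr 1
  omega

theorem signedPinWord_even {j : ℕ} (hj : j ≤ S.card) :
    signedPinWord S n (2 * j) = j - n := by
  rw [signedPinWord, if_neg (by omega), if_pos (by omega)]
  congr
  omega

theorem signedPinWord_tail (j : ℕ) :
    signedPinWord S n (2 * S.card + 1 + j) = sortedGet (tailSet S n) j := by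
  rw [signedPinWord, if_neg (by omega), if_neg (by omega)]
  congr 1
  omega

theorem mem_tailSet {x : ℤ} :
    x ∈ tailSet S n ↔ (1 ≤ x ∧ x ≤ (n : ℤ) - S.card - 1) ∧ x ∉ S.image (|·|) := by
  rw [tailSet, Finset.mem_sdiff, Finset.mem_Icc]

theorem card_tailSet (hS : ∀ x ∈ S, -x ∉ S) (hm : ∀ s ∈ S, |s| ≤ m) (hn : m + S.card < n) :
    (tailSet S n).card = n - 2 * S.card - 1 := by
  have hsub : S.image (|·|) ⊆ Finset.Icc 1 ((n : ℤ) - S.card - 1) :=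
    (abs_image_subset_Icc hS hm).trans (Finset.Icc_subset_Icc_right (by omega))
  rw [tailSet, Finset.card_sdiff_of_subset hsub, card_abs_image_of_signed hS, Int.card_Icc]
  omega

theorem isSignedPerm_signedPinWord (hS : ∀ x ∈ S, -x ∉ S) (hm : ∀ s ∈ S, |s| ≤ m)
    (hn : m + S.card < n) : IsSignedPerm n fun i => signedPinWord S n i := by
  have hcard := card_tailSet hS hm hn
  have hkm := card_le_of_signed hS hm
  refine isSignedPerm_of_forall_exists_abs_eq (fun ⟨i, hi⟩ => ?_) fun v hv1 hvn => ?_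
  · rcases nat_cases_zigzag S.card i with ⟨j, hj, rfl⟩ | ⟨j, hj, rfl⟩ | ⟨j, rfl⟩
    · rw [signedPinWord_odd hj]
      have hs := sortedGet_mem hj
      exact ⟨one_le_abs_of_signed hS hs, (hm _ hs).trans (by omega)⟩
    · rw [signedPinWord_even hj, abs_of_neg (by omega)]
      omega
    · have hmem := sortedGet_mem (T := tailSet S n) (j := j) (by omega)
      rw [mem_tailSet] at hmem
      rw [signedPinWord_tail, abs_of_pos (by omega)]
      omega
  · by_cases hA : v ∈ S.image (|·|)
    · obtain ⟨_, hs, rfl⟩ := Finset.mem_image.1 hA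
      obtain ⟨j, hj, rfl⟩ := exists_sortedGet_eq hs
      exact ⟨⟨2 * j + 1, by omega⟩, by simp only [signedPinWord_odd hj]⟩
    by_cases hv : (n : ℤ) - S.card ≤ v
    · refine ⟨⟨2 * (n - v).toNat, by omega⟩, ?_⟩
      simp only [signedPinWord_even (show (n - v).toNat ≤ S.card by omega)]
      rw [abs_of_neg (by omega)]
      omega
    · have hR : v ∈ tailSet S n := by
        rw [mem_tailSet]
        exact ⟨⟨hv1, by omega⟩, hA⟩
      obtain ⟨j, hj, rfl⟩ := exists_sortedGet_eq hR
      refine ⟨⟨2 * S.card + 1 + j, by omega⟩, ?_⟩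
      simp only [signedPinWord_tail]
      exact abs_of_pos (by omega)

theorem pinSet_signedPinWord (hS : ∀ x ∈ S, -x ∉ S) (hm : ∀ s ∈ S, |s| ≤ m)
    (hn : m + S.card < n) : PinSet n (fun i => signedPinWord S n i) = S := by
  have hcard := card_tailSet hS hm hn
  have hkm := card_le_of_signed hS hm
  rw [pinSet_eq_of_zigzag_of_increasing (k := S.card) (by omega)]
  · ext x
    simp only [Set.mem_ofPred_eq, Finset.mem_coe]
    constructor
    · rintro ⟨j, hj, rfl⟩
      rw [signedPinWord_odd hj]
      exact sortedGet_mem hj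
    · intro hx
      obtain ⟨j, hj, rfl⟩ := exists_sortedGet_eq hx
      exact ⟨j, hj, signedPinWord_odd hj⟩
  · intro i hi j hj
    rw [signedPinWord_even hi, signedPinWord_odd hj]
    have := abs_le.1 (hm _ (sortedGet_mem hj))
    omega
  · intro i hi hin
    obtain ⟨j, rfl⟩ : ∃ j, i = 2 * S.card + 1 + j := ⟨i - (2 * S.card + 1), by omega⟩
    rw [add_assoc _ j 1, signedPinWord_tail, signedPinWord_tail]
    exact sortedGet_lt_sortedGet (by omega) (by omega)

end Construction

theorem exists_isSignedPerm_pinSet_eq {S : Finset ℤ} {m n : ℕ} (hS : ∀ x ∈ S, -x ∉ S)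
    (hm : ∀ s ∈ S, |s| ≤ m) (hn : m + S.card < n) :
    ∃ w : Fin n → ℤ, IsSignedPerm n w ∧ PinSet n w = S :=
  ⟨_, isSignedPerm_signedPinWord hS hm hn, pinSet_signedPinWord hS hm hn⟩

theorem stmt0 (S : Finset ℤ) (hS : ∀ x ∈ S, -x ∉ S)
    (m : ℕ) (hm : m = S.sup fun s => s.natAbs) :
    ∃ w : Fin (2 * m + 1) → ℤ,
      IsSignedPerm (2 * m + 1) w ∧ PinSet (2 * m + 1) w = ↑S := by
  have hbound : ∀ s ∈ S, |s| ≤ m := fun s hs => by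
    rw [Int.abs_eq_natAbs, hm]
    exact_mod_cast Finset.le_sup (f := fun s => s.natAbs) hs
  exact exists_isSignedPerm_pinSet_eq hS hbound (by have := card_le_of_signed hS hbound; omega)
end

section
/- Any subset P of {1,...,n} with |P| ≤ (n-1)/2 is the pinnacle set of some signed permutation in the hyperoctahedral group B_n. -/
/-!
Place the elements of `P` at the positions `2, 4, …, 2|P|` (counting from 1) and fill the
other positions with the negatives of the remaining values of `{1, …, n}`, in decreasing
order from position `2|P|` on. Every positive entry beats every negative one, so the entries
of `P` are pinnacles and, as each negative entry has a larger left neighbour, nothing else is;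
`|P| ≤ (n - 1) / 2` gives the last element of `P` a right neighbour.
-/

open Set

lemma mem_pinSet_val_iff {n : ℕ} {f : ℕ → ℤ} {x : ℤ} :
    x ∈ PinSet n (fun i => f i) ↔
      ∃ i, 0 < i ∧ i + 1 < n ∧ f i = x ∧ f (i - 1) < f i ∧ f (i + 1) < f i := by
  simp only [PinSet, Set.mem_ofPred_eq, exists_prop]

lemma isSignedPerm_of_injOn {n : ℕ} {f : ℕ → ℤ} (hinj : InjOn (fun i => |f i|) (Iio n))
    (hmaps : MapsTo (fun i => |f i|) (Iio n) (Icc 1 n)) : IsSignedPerm n (fun i => f i) :=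
  ⟨fun i => hmaps i.2, fun i j h => Fin.ext (hinj i.2 j.2 h)⟩

lemma Finset.exists_strictMonoOn_bijOn {α : Type*} [LinearOrder α] [Nonempty α]
    (s : Finset α) :
    ∃ e : ℕ → α, StrictMonoOn e (Set.Iio s.card) ∧ BijOn e (Set.Iio s.card) s := by
  classical
  let f := s.orderEmbOfFin rfl
  let e : ℕ → α := fun i => if h : i < s.card then f ⟨i, h⟩ else Classical.arbitrary α
  have he : ∀ i (h : i < s.card), e i = f ⟨i, h⟩ := fun i h => dif_pos h
  have hmono : StrictMonoOn e (Set.Iio s.card) := fun i hi j hj hij => by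
    rw [he i hi, he j hj]
    exact f.strictMono hij
  refine ⟨e, hmono, fun i hi => ?_, hmono.injOn, fun x hx => ?_⟩
  · rw [he i hi]
    exact s.orderEmbOfFin_mem rfl _
  · obtain ⟨i, rfl⟩ : x ∈ Set.range f := by rwa [Finset.range_orderEmbOfFin]
    exact ⟨i, i.2, he i i.2⟩

def interleaveSlot (k i : ℕ) : ℕ ⊕ ℕ :=
  if i % 2 = 1 ∧ i < 2 * k then .inl (i / 2) else .inr (if i < 2 * k then i / 2 else i - k)

/-- The word `b 0, a 0, b 1, a 1, …, b (k-1), a (k-1), b k, b (k+1), …`. -/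
def interleave (k : ℕ) (a b : ℕ → ℤ) (i : ℕ) : ℤ :=
  Sum.elim a b (interleaveSlot k i)

lemma interleaveSlot_injective (k : ℕ) : Function.Injective (interleaveSlot k) := by
  intro i j h
  unfold interleaveSlot at h
  split_ifs at h <;> simp only [Sum.inl.injEq, Sum.inr.injEq] at h <;> omega

lemma interleaveSlot_mapsTo {k n : ℕ} (hk : 2 * k ≤ n) :
    MapsTo (interleaveSlot k) (Iio n) (Set.sumEquiv.symm (Iio k, Iio (n - k))) := by
  intro i hi
  simp only [interleaveSlot, Set.sumEquiv_symm_apply, Set.mem_union, Set.mem_image,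
    Set.mem_Iio] at hi ⊢
  split_ifs <;> simp <;> omega

section
variable {k : ℕ} {a b : ℕ → ℤ}

lemma interleave_two_mul_add_one {t : ℕ} (ht : t < k) : interleave k a b (2 * t + 1) = a t := by
  simp only [interleave, interleaveSlot]
  rw [if_pos (by omega)]
  simp only [Sum.elim_inl]
  congr 1
  omega

lemma interleave_two_mul {t : ℕ} (ht : t ≤ k) : interleave k a b (2 * t) = b t := by
  simp only [interleave, interleaveSlot]
  rw [if_neg (by omega)]
  simp only [Sum.elim_inr]
  congr 1
  split_ifs <;> omega

lemma interleave_of_le {i : ℕ} (hi : 2 * k ≤ i) : interleave k a b i = b (i - k) := by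
  simp only [interleave, interleaveSlot]
  rw [if_neg (by omega), if_neg (by omega), Sum.elim_inr]

end

-- `n - 1` truncates, so `hk` means `2 * k < n` except that `k = n = 0` is allowed.
lemma pinSet_interleave {k n : ℕ} {a b : ℕ → ℤ} (hk : 2 * k ≤ n - 1)
    (hba : ∀ i < k, ∀ j < n - k, b j < a i) (hb : StrictAntiOn b (Ico k (n - k))) :
    PinSet n (fun i => interleave k a b i) = a '' Iio k := by
  ext x
  rw [mem_pinSet_val_iff]
  constructor
  · rintro ⟨i, hi0, hin, rfl, hl, -⟩
    obtain ⟨t, rfl | rfl⟩ := Nat.even_or_odd' i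
    · exfalso
      rcases le_or_gt t k with htk | hkt
      · rw [show 2 * t - 1 = 2 * (t - 1) + 1 by omega,
          interleave_two_mul_add_one (t := t - 1) (by omega), interleave_two_mul htk] at hl
        exact (hba _ (by omega) _ (by omega)).not_gt hl
      · rw [interleave_of_le (i := 2 * t - 1) (by omega),
          interleave_of_le (i := 2 * t) (by omega)] at hl
        exact (hb ⟨by omega, by omega⟩ ⟨by omega, by omega⟩ (by omega)).not_gt hl
    · rcases lt_or_ge t k with htk | hkt
      · exact ⟨t, htk, (interleave_two_mul_add_one htk).symm⟩
      · exfalso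
        rw [interleave_of_le (i := 2 * t + 1 - 1) (by omega),
          interleave_of_le (i := 2 * t + 1) (by omega)] at hl
        exact (hb ⟨by omega, by omega⟩ ⟨by omega, by omega⟩ (by omega)).not_gt hl
  · rintro ⟨t, ht : t < k, rfl⟩
    refine ⟨2 * t + 1, by omega, by omega, interleave_two_mul_add_one ht, ?_, ?_⟩
    · rw [interleave_two_mul_add_one ht, Nat.add_sub_cancel, interleave_two_mul ht.le]
      exact hba t ht t (by omega)
    · rw [interleave_two_mul_add_one ht, show 2 * t + 1 + 1 = 2 * (t + 1) by omega,
        interleave_two_mul ht]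
      exact hba t ht (t + 1) (by omega)

lemma isSignedPerm_interleave_neg {k n : ℕ} {p q : ℕ → ℤ} (hk : 2 * k ≤ n)
    (hinj : InjOn (Sum.elim p q) (Set.sumEquiv.symm (Iio k, Iio (n - k))))
    (hmaps : MapsTo (Sum.elim p q) (Set.sumEquiv.symm (Iio k, Iio (n - k))) (Icc 1 n)) :
    IsSignedPerm n (fun i => interleave k p (-q) i) := by
  have habs : ∀ i < n, |interleave k p (-q) i| = Sum.elim p q (interleaveSlot k i) := by
    intro i hi
    have hpos := (hmaps (interleaveSlot_mapsTo hk hi)).1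
    simp only [interleave]
    generalize interleaveSlot k i = s at hpos
    cases s <;> simp only [Sum.elim_inl, Sum.elim_inr, Pi.neg_apply, abs_neg] at hpos ⊢ <;>
      exact abs_of_pos (by omega)
  refine isSignedPerm_of_injOn (fun i hi j hj hij => ?_) (fun i hi => ?_)
  · simp only [habs i hi, habs j hj] at hij
    exact interleaveSlot_injective k
      (hinj (interleaveSlot_mapsTo hk hi) (interleaveSlot_mapsTo hk hj) hij)
  · simpa only [habs i hi] using hmaps (interleaveSlot_mapsTo hk hi)

theorem stmt1 (n : ℕ) (P : Finset ℤ) (hP : P ⊆ Finset.Icc 1 (n : ℤ))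
    (hcard : P.card ≤ (n - 1) / 2) : APSB n P := by
  set k := P.card
  have hk : 2 * k ≤ n - 1 := by omega
  set Q := Finset.Icc 1 (n : ℤ) \ P
  have hQ : Q.card = n - k := by simp [Q, k, Finset.card_sdiff_of_subset hP]
  obtain ⟨p, -, hp⟩ := P.exists_strictMonoOn_bijOn
  obtain ⟨q, hq_mono, hq⟩ := Q.exists_strictMonoOn_bijOn
  rw [hQ] at hq_mono hq
  have hP' : (P : Set ℤ) ⊆ Icc 1 n := fun x hx => by simpa using hP hx
  have hQ' : (Q : Set ℤ) ⊆ Icc 1 n := by simp [Q]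
  refine ⟨fun i => interleave k p (-q) i, isSignedPerm_interleave_neg (by omega)
    (hp.injOn.sumElim hq.injOn fun i hi j hj hij => ?_)
    ((hp.mapsTo.mono_right hP').sumElim (hq.mapsTo.mono_right hQ')), ?_⟩
  · have hqj := hq.mapsTo hj
    simp [Q, ← hij, hp.mapsTo hi] at hqj
  rw [pinSet_interleave hk (fun i hi j hj => ?_) (fun i hi j hj hij => ?_), hp.image_eq]
  · have hpi := (hP' (hp.mapsTo hi)).1
    have hqj := (hQ' (hq.mapsTo hj)).1
    simp only [Pi.neg_apply]
    omega
  · exact neg_lt_neg (hq_mono hi.2 hj.2 hij)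
end

section
/- There is a bijection between the admissible pinnacle sets of the symmetric group S_n and the admissible pinnacle sets of the hyperoctahedral group B_n consisting entirely of negative values; explicitly, T ↦ {t - (n+1) : t ∈ T} is such a bijection. -/
lemma mem_iff_oeof {X : Finset ℤ} {k : ℕ} (h : X.card = k) (y : ℤ) :
    y ∈ X ↔ ∃ b : Fin k, X.orderEmbOfFin h b = y := by
  rw [← Finset.mem_coe, ← Finset.range_orderEmbOfFin X h]
  exact Set.mem_range

lemma card_filter_lt_oeof {X : Finset ℤ} {k : ℕ} (h : X.card = k) (a : Fin k) :
    (X.filter (· < X.orderEmbOfFin h a)).card = a := by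
  have he : X.filter (· < X.orderEmbOfFin h a) = (Finset.Iio a).image (X.orderEmbOfFin h) := by
    ext y
    simp only [Finset.mem_filter, Finset.mem_image, Finset.mem_Iio]
    constructor
    · rintro ⟨hy, hlt⟩
      obtain ⟨b, rfl⟩ := (mem_iff_oeof h y).mp hy
      exact ⟨b, (X.orderEmbOfFin h).lt_iff_lt.mp hlt, rfl⟩
    · rintro ⟨b, hb, rfl⟩
      exact ⟨Finset.orderEmbOfFin_mem X h b, (X.orderEmbOfFin h).lt_iff_lt.mpr hb⟩
  rw [he, Finset.card_image_of_injective _ (X.orderEmbOfFin h).injective, Fin.card_Iio]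

lemma card_filter_le_oeof {X : Finset ℤ} {k : ℕ} (h : X.card = k) (a : Fin k) :
    (X.filter (· ≤ X.orderEmbOfFin h a)).card = a + 1 := by
  have he : X.filter (· ≤ X.orderEmbOfFin h a) = (Finset.Iic a).image (X.orderEmbOfFin h) := by
    ext y
    simp only [Finset.mem_filter, Finset.mem_image, Finset.mem_Iic]
    constructor
    · rintro ⟨hy, hle⟩
      obtain ⟨b, rfl⟩ := (mem_iff_oeof h y).mp hy
      exact ⟨b, (X.orderEmbOfFin h).le_iff_le.mp hle, rfl⟩
    · rintro ⟨b, hb, rfl⟩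
      exact ⟨Finset.orderEmbOfFin_mem X h b, (X.orderEmbOfFin h).le_iff_le.mpr hb⟩
  rw [he, Finset.card_image_of_injective _ (X.orderEmbOfFin h).injective, Fin.card_Iic]

lemma oeof_lt_of_card {X : Finset ℤ} {k : ℕ} (h : X.card = k) (a : Fin k) (x : ℤ)
    (hc : (a : ℕ) + 1 ≤ (X.filter (· < x)).card) : X.orderEmbOfFin h a < x := by
  by_contra hx
  push_neg at hx
  have hle : (X.filter (· < x)).card ≤ (X.filter (· < X.orderEmbOfFin h a)).card := by
    apply Finset.card_le_card
    intro y hy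
    simp only [Finset.mem_filter] at hy ⊢
    exact ⟨hy.1, lt_of_lt_of_le hy.2 hx⟩
  rw [card_filter_lt_oeof] at hle
  omega

lemma cond_of_apsb (n : ℕ) (S : Finset ℤ) (hB : APSB n S) :
    ∀ s ∈ S, (2 * (S.filter (· ≤ s)).card : ℤ) ≤ (n : ℤ) + s := by
  classical
  obtain ⟨w, hsp, hpin⟩ := hB
  intro s hs
  have hwinj : Function.Injective w := by
    intro a b hab
    exact hsp.2 (show |w a| = |w b| by rw [hab])
  set v : ℕ → ℤ := fun j => if h : j < n then w ⟨j, h⟩ else 0 with hv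
  set P : Finset ℕ := (Finset.range n).filter
    (fun p => 0 < p ∧ p + 1 < n ∧ v (p-1) < v p ∧ v (p+1) < v p ∧ v p ≤ s) with hP
  -- every pinnacle value ≤ s has a position in P
  have hex : ∀ s' ∈ S.filter (· ≤ s), ∃ p ∈ P, v p = s' := by
    intro s' hs'
    rw [Finset.mem_filter] at hs'
    have : s' ∈ PinSet n w := by rw [hpin]; exact_mod_cast hs'.1
    obtain ⟨i, h0, h2, heq, hl, hr⟩ := this
    refine ⟨i, ?_, ?_⟩
    · rw [hP, Finset.mem_filter, Finset.mem_range]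
      have hin : i < n := by omega
      have e1 : v i = w ⟨i, hin⟩ := by simp [hv, hin]
      have e2 : v (i-1) = w ⟨i-1, by omega⟩ := by simp [hv, show i-1 < n by omega]
      have e3 : v (i+1) = w ⟨i+1, h2⟩ := by simp [hv, h2]
      refine ⟨by omega, by omega, by omega, ?_, ?_, ?_⟩
      · rw [e1, e2]; exact hl
      · rw [e1, e3]; exact hr
      · rw [e1, heq]; exact hs'.2
    · simp [hv, show i < n by omega, heq]
  have hcard1 : (S.filter (· ≤ s)).card ≤ P.card := by
    apply Finset.card_le_card_of_injOn
      (fun s' => if h : ∃ p ∈ P, v p = s' then h.choose else 0)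
    · intro s' hs'
      have h := hex s' hs'
      simp only [dif_pos h]
      exact h.choose_spec.1
    · intro s1 h1 s2 h2 he
      have hh1 := hex s1 h1
      have hh2 := hex s2 h2
      simp only [dif_pos hh1, dif_pos hh2] at he
      have := hh1.choose_spec.2
      rw [he, hh2.choose_spec.2] at this
      exact this.symm
  -- positions with value ≤ s
  set B : Finset ℕ := (Finset.range n).filter (fun j => v j ≤ s) with hB
  have hPmem : ∀ p ∈ P, 0 < p ∧ p + 1 < n ∧ v (p-1) < v p ∧ v (p+1) < v p ∧ v p ≤ s := by
    intro p hp; rw [hP, Finset.mem_filter] at hp; exact hp.2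
  have hPne : P.Nonempty := by
    apply Finset.card_pos.mp
    have h1 : 0 < (S.filter (· ≤ s)).card :=
      Finset.card_pos.mpr ⟨s, Finset.mem_filter.mpr ⟨hs, le_refl s⟩⟩
    omega
  set pm := P.min' hPne with hpm
  have hpmP : pm ∈ P := P.min'_mem hPne
  have hCsub : (P ∪ P.image (· + 1)) ∪ {pm - 1} ⊆ B := by
    intro j hj
    rw [Finset.mem_union, Finset.mem_union] at hj
    rw [hB, Finset.mem_filter, Finset.mem_range]
    rcases hj with (hj | hj) | hj
    · obtain ⟨_, h2, _, _, h5⟩ := hPmem j hj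
      exact ⟨by omega, h5⟩
    · rw [Finset.mem_image] at hj
      obtain ⟨p, hp, rfl⟩ := hj
      obtain ⟨_, h2, _, h4, h5⟩ := hPmem p hp
      exact ⟨by omega, le_of_lt (lt_of_lt_of_le h4 h5)⟩
    · rw [Finset.mem_singleton] at hj
      subst hj
      obtain ⟨h1, h2, h3, _, h5⟩ := hPmem pm hpmP
      exact ⟨by omega, le_of_lt (lt_of_lt_of_le h3 h5)⟩
  have hd1 : Disjoint P (P.image (· + 1)) := by
    rw [Finset.disjoint_left]
    intro p hp him
    rw [Finset.mem_image] at him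
    obtain ⟨q, hq, hqe⟩ := him
    obtain ⟨_, _, hp3, _, _⟩ := hPmem p hp
    obtain ⟨_, _, _, hq4, _⟩ := hPmem q hq
    -- p = q + 1 : v q < v p and v p < v q
    have : v (p - 1) = v q := by rw [← hqe]; norm_num
    rw [this] at hp3
    have : v (q + 1) = v p := by rw [hqe]
    rw [this] at hq4
    omega
  have hd2 : Disjoint (P ∪ P.image (· + 1)) {pm - 1} := by
    rw [Finset.disjoint_right]
    intro j hj hju
    rw [Finset.mem_singleton] at hj
    subst hj
    have hpm1 : 0 < pm := (hPmem pm hpmP).1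
    rw [Finset.mem_union] at hju
    rcases hju with h | h
    · have := P.min'_le _ h
      omega
    · rw [Finset.mem_image] at h
      obtain ⟨q, hq, hqe⟩ := h
      have := P.min'_le _ hq
      have hq1 : 0 < q := (hPmem q hq).1
      omega
  have hcard2 : 2 * P.card + 1 ≤ B.card := by
    have := Finset.card_le_card hCsub
    rw [Finset.card_union_of_disjoint hd2, Finset.card_union_of_disjoint hd1,
      Finset.card_image_of_injective _ (add_left_injective 1), Finset.card_singleton] at this
    omega
  -- upper bound on B.card
  have hcard3 : B.card ≤ (s + n + 1).toNat := by
    have himg : B.image v ⊆ Finset.Icc (-(n:ℤ)) s := by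
      intro x hx
      rw [Finset.mem_image] at hx
      obtain ⟨j, hj, rfl⟩ := hx
      rw [hB, Finset.mem_filter, Finset.mem_range] at hj
      rw [Finset.mem_Icc]
      refine ⟨?_, hj.2⟩
      have : v j = w ⟨j, hj.1⟩ := by simp [hv, hj.1]
      rw [this]
      have := (hsp.1 ⟨j, hj.1⟩).2
      have habs := abs_le.mp this
      exact habs.1
    have hinj : Set.InjOn v ↑B := by
      intro j1 hj1 j2 hj2 he
      rw [Finset.mem_coe, hB, Finset.mem_filter, Finset.mem_range] at hj1 hj2
      have e1 : v j1 = w ⟨j1, hj1.1⟩ := by simp [hv, hj1.1]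
      have e2 : v j2 = w ⟨j2, hj2.1⟩ := by simp [hv, hj2.1]
      rw [e1, e2] at he
      have := hwinj he
      exact congrArg Fin.val this
    calc B.card = (B.image v).card := (Finset.card_image_of_injOn hinj).symm
    _ ≤ (Finset.Icc (-(n:ℤ)) s).card := Finset.card_le_card himg
    _ = (s + n + 1).toNat := by rw [Int.card_Icc]; congr 1; ring
  omega

lemma apsa_of_cond (n : ℕ) (T : Finset ℤ)
    (hcond : ∀ t ∈ T, (2 * (T.filter (· ≤ t)).card + 1 : ℤ) ≤ t ∧ t ≤ (n : ℤ)) :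
    APSA n T := by
  classical
  set k := T.card with hk
  set e := T.orderEmbOfFin hk.symm with he
  -- basic bounds on elements of T
  have hebound : ∀ a : Fin k, 2 * (a : ℤ) + 3 ≤ e a ∧ e a ≤ (n : ℤ) := by
    intro a
    have hmem := Finset.orderEmbOfFin_mem T hk.symm a
    have hc := hcond (e a) hmem
    have := card_filter_le_oeof hk.symm a
    rw [this] at hc
    push_cast at hc
    constructor
    · have := hc.1; omega
    · exact hc.2
  have hTsub : T ⊆ Finset.Icc (1:ℤ) n := by
    intro t ht
    obtain ⟨a, rfl⟩ := (mem_iff_oeof hk.symm t).mp ht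
    rw [Finset.mem_Icc]
    show (1:ℤ) ≤ e a ∧ e a ≤ (n:ℤ)
    have h1 := (hebound a).1
    exact ⟨by omega, (hebound a).2⟩
  have hkn : 0 < k → 2 * k < n := by
    intro hk0
    have := hebound ⟨k - 1, by omega⟩
    simp only at this
    have h1 : (2 * ((k:ℤ) - 1) + 3 : ℤ) ≤ 2 * ((⟨k-1, by omega⟩ : Fin k) : ℤ) + 3 := by
      push_cast
      omega
    have := this
    omega
  set R := Finset.Icc (1:ℤ) n \ T with hR
  have hIcard : (Finset.Icc (1:ℤ) n).card = n := by
    rw [Int.card_Icc]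
    omega
  have hRcard : R.card = n - k := by
    rw [hR, Finset.card_sdiff_of_subset hTsub, hIcard, hk]
  have hRsub : R ⊆ Finset.Icc (1:ℤ) n := by rw [hR]; exact Finset.sdiff_subset
  have hRnT : ∀ x ∈ R, x ∉ T := by
    intro x hx
    rw [hR, Finset.mem_sdiff] at hx
    exact hx.2
  set g := R.orderEmbOfFin hRcard with hg
  -- key count: R has many elements below e a
  have hcount : ∀ a : Fin k, (a : ℕ) + 2 ≤ (R.filter (· < e a)).card := by
    intro a
    have hsplit : (Finset.Icc (1:ℤ) n).filter (· < e a)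
        = T.filter (· < e a) ∪ R.filter (· < e a) := by
      ext y
      simp only [Finset.mem_filter, Finset.mem_union, hR, Finset.mem_sdiff]
      constructor
      · rintro ⟨hy, hlt⟩
        by_cases hyT : y ∈ T
        · exact Or.inl ⟨hyT, hlt⟩
        · exact Or.inr ⟨⟨hy, hyT⟩, hlt⟩
      · rintro (⟨hy, hlt⟩ | ⟨⟨hy, _⟩, hlt⟩)
        · exact ⟨hTsub hy, hlt⟩
        · exact ⟨hy, hlt⟩
    have hdisj : Disjoint (T.filter (· < e a)) (R.filter (· < e a)) := by
      apply Finset.disjoint_filter_filter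
      exact Finset.disjoint_left.mpr fun x hxT hxR => hRnT x hxR hxT
    have hIfil : (Finset.Icc (1:ℤ) n).filter (· < e a) = Finset.Icc (1:ℤ) (e a - 1) := by
      ext y
      simp only [Finset.mem_filter, Finset.mem_Icc]
      have := (hebound a).2
      omega
    have hIfc : ((Finset.Icc (1:ℤ) n).filter (· < e a)).card = (e a - 1).toNat := by
      rw [hIfil, Int.card_Icc]
      congr 1
      ring
    have hTfc := card_filter_lt_oeof hk.symm a
    have hcards := Finset.card_union_of_disjoint hdisj
    rw [← hsplit, hIfc, hTfc] at hcards
    have hea := (hebound a).1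
    omega
  -- definitions of the word
  set F : ℕ → ℤ := fun a => if h : a < k then e ⟨a, h⟩ else 0 with hF
  set G : ℕ → ℤ := fun b => if h : b < n - k then g ⟨b, h⟩ else 0 with hG
  set w : Fin n → ℤ := fun j =>
    if (j : ℕ) < 2*k ∧ (j : ℕ) % 2 = 1 then F ((j : ℕ)/2)
    else G (if (j : ℕ) < 2*k then (j : ℕ)/2 else (j : ℕ) - k) with hw
  -- computation lemmas
  have hodd : ∀ (a : ℕ) (ha : a < k) (hj : 2*a+1 < n), w ⟨2*a+1, hj⟩ = e ⟨a, ha⟩ := by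
    intro a ha hj
    have hc : (2*a+1) < 2*k ∧ (2*a+1) % 2 = 1 := ⟨by omega, by omega⟩
    simp only [hw, if_pos hc]
    have : (2*a+1)/2 = a := by omega
    rw [this, hF]
    simp [ha]
  have heven : ∀ (a : ℕ) (ha : a < n - k) (h2 : 2*a < 2*k) (hj : 2*a < n),
      w ⟨2*a, hj⟩ = g ⟨a, ha⟩ := by
    intro a ha h2 hj
    have hc : ¬((2*a) < 2*k ∧ (2*a) % 2 = 1) := by omega
    simp only [hw, if_neg hc, if_pos h2]
    have : (2*a)/2 = a := by omega
    rw [this, hG]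
    simp [ha]
  have htail : ∀ (j : ℕ) (hj : j < n) (h2 : 2*k ≤ j),
      w ⟨j, hj⟩ = g ⟨j - k, by omega⟩ := by
    intro j hj h2
    have hc : ¬(j < 2*k ∧ j % 2 = 1) := by omega
    simp only [hw, if_neg hc, if_neg (by omega : ¬ j < 2*k), hG]
    simp [show j - k < n - k by omega]
  -- canonical form of every entry
  have hform : ∀ j : Fin n,
      (∃ (a : ℕ) (ha : a < k), (j:ℕ) = 2*a+1 ∧ w j = e ⟨a, ha⟩) ∨
      (∃ (b : ℕ) (hb : b < n - k), w j = g ⟨b, hb⟩ ∧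
        (((j:ℕ) < 2*k ∧ (j:ℕ) = 2*b) ∨ (2*k ≤ (j:ℕ) ∧ (j:ℕ) = b + k))) := by
    intro j
    rcases Nat.lt_or_ge (j : ℕ) (2*k) with hlt | hge
    · rcases Nat.even_or_odd (j : ℕ) with he' | ho'
      · obtain ⟨a, ha⟩ := he'
        have hak : a < k := by omega
        have hank : a < n - k := by
          have := hkn (by omega)
          omega
        refine Or.inr ⟨a, hank, ?_, Or.inl ⟨hlt, by omega⟩⟩
        have : j = ⟨2*a, by omega⟩ := by apply Fin.ext; simp; omega
        rw [this]
        exact heven a hank (by omega) (by omega)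
      · obtain ⟨a, ha⟩ := ho'
        have hak : a < k := by omega
        refine Or.inl ⟨a, hak, by omega, ?_⟩
        have : j = ⟨2*a+1, by omega⟩ := by apply Fin.ext; simp; omega
        rw [this]
        exact hodd a hak (by omega)
    · have hj := j.2
      refine Or.inr ⟨(j:ℕ) - k, by omega, ?_, Or.inr ⟨hge, by omega⟩⟩
      exact htail (j:ℕ) j.2 hge
  -- membership
  have hmemIcc : ∀ j : Fin n, w j ∈ Finset.Icc (1:ℤ) n := by
    intro j
    rcases hform j with ⟨a, ha, _, hwj⟩ | ⟨b, hb, hwj, _⟩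
    · rw [hwj]; exact hTsub (Finset.orderEmbOfFin_mem T hk.symm _)
    · rw [hwj]
      exact hRsub (Finset.orderEmbOfFin_mem R hRcard (⟨b, hb⟩ : Fin (n-k)))
  have hRT : ∀ (b : Fin (n - k)) (a : Fin k), g b ≠ e a := by
    intro b a hba
    have hgb : g b ∈ R := Finset.orderEmbOfFin_mem R hRcard b
    have heT : e a ∈ T := Finset.orderEmbOfFin_mem T hk.symm a
    rw [← hba] at heT
    exact hRnT _ hgb heT
  -- injectivity
  have hwinj : Function.Injective w := by
    intro j1 j2 hj
    rcases hform j1 with ⟨a1, ha1, hja1, hwa1⟩ | ⟨b1, hb1, hwb1, hcb1⟩ <;>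
      rcases hform j2 with ⟨a2, ha2, hja2, hwa2⟩ | ⟨b2, hb2, hwb2, hcb2⟩
    · rw [hwa1, hwa2] at hj
      have := e.injective hj
      apply Fin.ext
      rw [hja1, hja2]
      have : a1 = a2 := congrArg Fin.val this
      omega
    · rw [hwa1, hwb2] at hj
      exact absurd hj.symm (hRT _ _)
    · rw [hwb1, hwa2] at hj
      exact absurd hj (hRT _ _)
    · rw [hwb1, hwb2] at hj
      have hbe : b1 = b2 := by
        have := g.injective hj
        exact congrArg Fin.val this
      subst hbe
      apply Fin.ext
      rcases hcb1 with ⟨h1, h1'⟩ | ⟨h1, h1'⟩ <;> rcases hcb2 with ⟨h2, h2'⟩ | ⟨h2, h2'⟩ <;> omega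
  -- pinnacle set
  have hpin : PinSet n w = ↑T := by
    ext x
    constructor
    · rintro ⟨i, h0, h2, heq, hl, hr⟩
      rcases hform ⟨i, by omega⟩ with ⟨a, ha, hja, hwa⟩ | ⟨b, hb, hwb, hcb⟩
      · simp only at hja hwa
        rw [← heq, hwa]
        exact Finset.mem_coe.mpr (Finset.orderEmbOfFin_mem T hk.symm _)
      · exfalso
        simp only at hwb hcb
        rcases hcb with ⟨hlt, hieq⟩ | ⟨hge, hieq⟩
        · -- i = 2b, i < 2k: right neighbor is e b with g b < e b
          have hbk : b < k := by omega
          have hb0 : 0 < b := by omega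
          have hrn : w ⟨i+1, h2⟩ = e ⟨b, hbk⟩ := by
            have : (⟨i+1, h2⟩ : Fin n) = ⟨2*b+1, by omega⟩ := by apply Fin.ext; simp; omega
            rw [this]
            exact hodd b hbk _
          rw [hrn, hwb] at hr
          have : g ⟨b, hb⟩ < e ⟨b, hbk⟩ := by
            apply oeof_lt_of_card hRcard
            have hcc := hcount ⟨b, hbk⟩
            simp only [Fin.val_mk] at hcc ⊢
            omega
          exact absurd hr (not_lt.mpr (le_of_lt this))
        · -- i ≥ 2k: right neighbor is g (i+1-k) > g (i-k)
          have hrn : w ⟨i+1, h2⟩ = g ⟨i+1-k, by omega⟩ := htail (i+1) h2 (by omega)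
          rw [hrn, hwb] at hr
          have : g ⟨b, hb⟩ < g ⟨i+1-k, by omega⟩ := by
            apply g.strictMono
            simp only [Fin.mk_lt_mk]
            omega
          exact absurd hr (not_lt.mpr (le_of_lt this))
    · intro hx
      obtain ⟨a, rfl⟩ := (mem_iff_oeof hk.symm x).mp (Finset.mem_coe.mp hx)
      have hk0 : 0 < k := by
        rcases Nat.eq_zero_or_pos k with h | h
        · exact absurd a.2 (by omega)
        · exact h
      have h2kn := hkn hk0
      have hak := a.2
      refine ⟨2*(a:ℕ)+1, by omega, by omega, ?_, ?_, ?_⟩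
      · have h := hodd (a:ℕ) a.2 (by omega)
        simpa [Fin.eta] using h
      · -- left neighbor: g a < e a
        have hle : (⟨2*(a:ℕ)+1-1, by omega⟩ : Fin n) = ⟨2*(a:ℕ), by omega⟩ := by
          apply Fin.ext; simp
        rw [hle, heven (a:ℕ) (by omega) (by omega) (by omega),
          hodd (a:ℕ) a.2 (by omega)]
        apply oeof_lt_of_card hRcard
        have hcc := hcount ⟨(a:ℕ), a.2⟩
        simp only [Fin.val_mk] at hcc ⊢
        omega
      · -- right neighbor: g (a+1) < e a
        have h1 : 2*(a:ℕ)+1+1 = 2*((a:ℕ)+1) := by omega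
        have hwr : w ⟨2*(a:ℕ)+1+1, by omega⟩ = g ⟨(a:ℕ)+1, by omega⟩ := by
          rcases Nat.lt_or_ge (2*((a:ℕ)+1)) (2*k) with hlt | hge
          · have : (⟨2*(a:ℕ)+1+1, by omega⟩ : Fin n) = ⟨2*((a:ℕ)+1), by omega⟩ := by
              apply Fin.ext; simp; omega
            rw [this]
            exact heven ((a:ℕ)+1) (by omega) hlt (by omega)
          · have hae : (a:ℕ) + 1 = k := by omega
            have := htail (2*(a:ℕ)+1+1) (by omega) (by omega)
            rw [this]
            congr 1
            apply Fin.ext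
            simp
            omega
        rw [hwr, hodd (a:ℕ) a.2 (by omega)]
        apply oeof_lt_of_card hRcard
        have hcc := hcount ⟨(a:ℕ), a.2⟩
        simp only [Fin.val_mk] at hcc ⊢
        omega
  -- assemble
  refine ⟨w, ⟨?_, ?_⟩, ?_, hpin⟩
  · intro i
    have h := Finset.mem_Icc.mp (hmemIcc i)
    rw [abs_of_pos (show (0:ℤ) < w i by omega)]
    exact h
  · intro i1 i2 hi
    have hi' : |w i1| = |w i2| := hi
    have h1 := Finset.mem_Icc.mp (hmemIcc i1)
    have h2 := Finset.mem_Icc.mp (hmemIcc i2)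
    rw [abs_of_pos (show (0:ℤ) < w i1 by omega),
      abs_of_pos (show (0:ℤ) < w i2 by omega)] at hi'
    exact hwinj hi'
  · intro i
    have := Finset.mem_Icc.mp (hmemIcc i)
    omega

lemma pinset_shift (n : ℕ) (w : Fin n → ℤ) (c : ℤ) :
    PinSet n (fun i => w i - c) = (fun t => t - c) '' PinSet n w := by
  ext x
  constructor
  · rintro ⟨i, h0, h2, heq, hl, hr⟩
    simp only at heq hl hr
    refine ⟨w ⟨i, by omega⟩, ⟨i, h0, h2, rfl, by omega, by omega⟩, ?_⟩
    show w ⟨i, by omega⟩ - c = x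
    omega
  · rintro ⟨y, ⟨i, h0, h2, heq, hl, hr⟩, rfl⟩
    refine ⟨i, h0, h2, ?_, ?_, ?_⟩ <;> simp only [] <;> omega

theorem stmt2 (n : ℕ) :
    Set.BijOn (fun S : Finset ℤ => S.image fun t => t - ((n : ℤ) + 1))
      {S : Finset ℤ | APSA n S}
      {S : Finset ℤ | APSB n S ∧ ∀ x ∈ S, x < 0} := by
  classical
  refine ⟨?_, ?_, ?_⟩
  · -- MapsTo
    rintro S ⟨w, hsp, hpos, hpin⟩
    have hwub : ∀ i, 1 ≤ w i ∧ w i ≤ (n:ℤ) := by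
      intro i
      have h := hsp.1 i
      rw [abs_of_pos (hpos i)] at h
      exact h
    simp only [Set.mem_setOf_eq]
    constructor
    · refine ⟨fun i => w i - ((n:ℤ)+1), ⟨?_, ?_⟩, ?_⟩
      · intro i
        have h := hwub i
        rw [abs_of_neg (show w i - ((n:ℤ)+1) < 0 by omega)]
        omega
      · intro i j hij
        simp only at hij
        have hi := hwub i
        have hj := hwub j
        rw [abs_of_neg (show w i - ((n:ℤ)+1) < 0 by omega),
          abs_of_neg (show w j - ((n:ℤ)+1) < 0 by omega)] at hij
        have hw : w i = w j := by omega
        exact hsp.2 (show |w i| = |w j| by rw [hw])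
      · rw [pinset_shift, hpin, Finset.coe_image]
    · intro x hx
      rw [Finset.mem_image] at hx
      obtain ⟨t, htS, rfl⟩ := hx
      have ht : t ∈ PinSet n w := by rw [hpin]; exact Finset.mem_coe.mpr htS
      obtain ⟨i, h0, h2, heq, -, -⟩ := ht
      have := (hwub ⟨i, by omega⟩).2
      omega
  · -- InjOn
    intro S1 _ S2 _ h
    exact Finset.image_injective (fun a b hab => by simpa using hab) h
  · -- SurjOn
    intro S hS
    obtain ⟨hB, hneg⟩ := hS
    have hcond := cond_of_apsb n S hB
    set T := S.image (fun t => t + ((n:ℤ)+1)) with hT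
    have hback : T.image (fun t => t - ((n:ℤ)+1)) = S := by
      rw [hT, Finset.image_image]
      ext x
      simp only [Finset.mem_image, Function.comp_apply]
      constructor
      · rintro ⟨y, hy, rfl⟩
        have : y + ((n:ℤ)+1) - ((n:ℤ)+1) = y := by ring
        rw [this]
        exact hy
      · intro hx
        exact ⟨x, hx, by ring⟩
    have hfc : ∀ s ∈ S, (T.filter (· ≤ s + ((n:ℤ)+1))).card = (S.filter (· ≤ s)).card := by
      intro s hs
      have himg : T.filter (· ≤ s + ((n:ℤ)+1))
          = (S.filter (· ≤ s)).image (fun t => t + ((n:ℤ)+1)) := by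
        rw [hT, Finset.filter_image]
        congr 1
        ext y
        simp only [Finset.mem_filter]
        constructor
        · rintro ⟨h1, h2⟩; exact ⟨h1, by omega⟩
        · rintro ⟨h1, h2⟩; exact ⟨h1, by omega⟩
      rw [himg, Finset.card_image_of_injective _
        (show Function.Injective fun t : ℤ => t + ((n:ℤ)+1) from fun a b hab => by simpa using hab)]
    refine ⟨T, ?_, hback⟩
    apply apsa_of_cond
    intro t ht
    obtain ⟨s, hsS, rfl⟩ := Finset.mem_image.mp ht
    have h1 := hcond s hsS
    have h2 := hfc s hsS
    have h3 := hneg s hsS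
    constructor
    · rw [h2]; omega
    · omega
end

section
/- A signed set S = P ⊔ N (P the positive part, N the negative part) is an admissible pinnacle set of the hyperoctahedral group B_n if and only if: |P| + |N| ≤ (n-1)/2, P ⊆ {1,...,n}, N ⊆ -({1,...,n} \ P), and N is an admissible pinnacle set of the totally ordered set -({1,...,n} \ P). -/
/-!
Over a finite set `Y ⊆ ℤ`, `T` is an admissible pinnacle set iff `T ⊆ Y` and every `x ∈ T`
satisfies `2 · #{t ∈ T | t ≤ x} < #{y ∈ Y | y ≤ x}`. Necessity: the `k` pinnacles `≤ x` sit at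
non-adjacent positions, so with their left neighbours and the right neighbour of the last one they
give `2k + 1` entries `≤ x`. Sufficiency: write the least element of `Y`, then the least element
of `T`, and recurse; the criterion makes the next entry smaller than that pinnacle.

For `B_n`, the negative entries of a signed permutation whose positive pinnacles form `P` lie in
`-([n] \ P)`, and every entry below a negative pinnacle is negative, so the criterion for `N`
inside `-([n] \ P)` follows from the one for `S`. Conversely, adjoining `P` to `-([n] \ P)` as
larger pinnacles keeps the criterion exactly when `|P| + |N| ≤ (n - 1) / 2`, and any arrangement
of `-([n] \ P) ∪ P` is a signed permutation.
-/

open Finset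

def pinnacles (l : List ℤ) : Set ℤ :=
  {x | ∃ (i : ℕ) (h : i + 1 < l.length), 0 < i ∧ l[i] = x ∧ l[i - 1] < l[i] ∧ l[i + 1] < l[i]}

theorem pinSet_eq_pinnacles_ofFn (n : ℕ) (w : Fin n → ℤ) :
    PinSet n w = pinnacles (List.ofFn w) := by
  ext x
  simp only [PinSet, pinnacles, Set.mem_ofPred_eq, List.length_ofFn, List.getElem_ofFn]
  constructor
  · rintro ⟨i, h0, h2, hx, hl, hr⟩
    exact ⟨i, h2, h0, hx, hl, hr⟩
  · rintro ⟨i, h2, h0, hx, hl, hr⟩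
    exact ⟨i, h0, h2, hx, hl, hr⟩

theorem mem_of_mem_pinnacles {l : List ℤ} {x : ℤ} (hx : x ∈ pinnacles l) : x ∈ l := by
  obtain ⟨i, h, -, rfl, -⟩ := hx
  exact List.getElem_mem _

theorem pinnacles_eq_empty_of_sortedLT {l : List ℤ} (hl : l.SortedLT) : pinnacles l = ∅ := by
  refine Set.eq_empty_of_forall_notMem ?_
  rintro x ⟨i, h, -, -, -, hr⟩
  refine hr.not_gt ?_
  exact hl (show (⟨i, by omega⟩ : Fin l.length) < ⟨i + 1, h⟩ from Nat.lt_succ_self i)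

theorem pinnacles_cons_cons_cons {a b c : ℤ} (l : List ℤ) (hab : a < b) (hcb : c < b) :
    pinnacles (a :: b :: c :: l) = insert b (pinnacles (c :: l)) := by
  ext x
  simp only [pinnacles, Set.mem_ofPred_eq, Set.mem_insert_iff, List.length_cons]
  constructor
  · rintro ⟨_ | _ | _ | i, h, h0, hx, hl, hr⟩
    · omega
    · exact Or.inl hx.symm
    · exact absurd hl (by simpa using hcb.le)
    · exact Or.inr ⟨i + 1, by simp at h ⊢; omega, by omega, by simpa using hx, by simpa using hl,
        by simpa using hr⟩
  · rintro (rfl | ⟨_ | i, h, h0, hx, hl, hr⟩)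
    · exact ⟨1, by simp, by omega, rfl, hab, hcb⟩
    · omega
    · exact ⟨i + 3, by simp at h ⊢; omega, by omega, by simpa using hx, by simpa using hl,
        by simpa using hr⟩

theorem two_mul_card_lt_card_union_image_pred_succ {I : Finset ℕ} (hI : I.Nonempty)
    (hpos : ∀ i ∈ I, 0 < i) (hsep : ∀ i ∈ I, i + 1 ∉ I) :
    2 * #I < #(I ∪ I.image (· - 1) ∪ I.image (· + 1)) := by
  have hdisj : Disjoint I (I.image (· - 1)) := by
    refine disjoint_right.2 ?_
    rintro _ hj hi
    obtain ⟨i, hi', rfl⟩ := mem_image.1 hj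
    exact hsep _ hi (by rwa [Nat.sub_add_cancel (hpos i hi')])
  have hcard : #(I ∪ I.image (· - 1)) = 2 * #I := by
    rw [card_union_of_disjoint hdisj, card_image_of_injOn, two_mul]
    intro i hi j hj hij
    have := hpos i hi
    have := hpos j hj
    simp only at hij
    omega
  have hmax : I.max' hI + 1 ∉ I ∪ I.image (· - 1) := by
    simp only [mem_union, mem_image, not_or, not_exists, not_and]
    exact ⟨fun h => by simpa using I.le_max' _ h,
      fun i hi h => by have := I.le_max' i hi; omega⟩
  calc 2 * #I = #(I ∪ I.image (· - 1)) := hcard.symm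
    _ < _ := card_lt_card <| (ssubset_iff_of_subset subset_union_left).2
        ⟨_, mem_union_right _ (mem_image_of_mem _ (I.max'_mem hI)), hmax⟩

def PinnacleCriterion (Y T : Finset ℤ) : Prop :=
  ∀ x ∈ T, 2 * #{y ∈ T | y ≤ x} < #{y ∈ Y | y ≤ x}

theorem PinnacleCriterion.mono {Y Y' T : Finset ℤ} (h : PinnacleCriterion Y T) (hY : Y ⊆ Y') :
    PinnacleCriterion Y' T := fun x hx =>
  (h x hx).trans_le (card_le_card (filter_subset_filter _ hY))

theorem List.card_le_card_filter_toFinset {l : List ℤ} (hl : l.Nodup) {K : Finset ℕ} {x : ℤ}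
    (hK : ∀ j ∈ K, ∃ h : j < l.length, l[j] ≤ x) : #K ≤ #{y ∈ l.toFinset | y ≤ x} := by
  refine card_le_card_of_injOn (fun j => l.getD j 0) (fun j hj => ?_) (fun i hi j hj hij => ?_)
  · obtain ⟨h, hjx⟩ := hK j hj
    simp only [mem_coe, List.getD_eq_getElem _ _ h]
    exact Finset.mem_filter.2 ⟨List.mem_toFinset.2 (List.getElem_mem h), hjx⟩
  · obtain ⟨hi', -⟩ := hK i hi
    obtain ⟨hj', -⟩ := hK j hj
    simp only [List.getD_eq_getElem _ _ hi', List.getD_eq_getElem _ _ hj'] at hij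
    exact hl.getElem_inj_iff.1 hij

theorem pinnacleCriterion_toFinset {l : List ℤ} (hl : l.Nodup) {T : Finset ℤ}
    (hT : pinnacles l = T) : PinnacleCriterion l.toFinset T := by
  intro x hx
  set v : ℕ → ℤ := fun i => l.getD i 0
  have hv : ∀ i (h : i < l.length), v i = l[i] := fun i h => List.getD_eq_getElem _ _ h
  set J := {i ∈ range l.length |
    0 < i ∧ i + 1 < l.length ∧ v (i - 1) < v i ∧ v (i + 1) < v i ∧ v i ≤ x}
  have hJ : ∀ i ∈ J, 0 < i ∧ i + 1 < l.length ∧ v (i - 1) < v i ∧ v (i + 1) < v i ∧ v i ≤ x :=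
    fun i hi => (mem_filter.1 hi).2
  have hcover : {y ∈ T | y ≤ x} ⊆ J.image v := by
    intro y hy
    obtain ⟨hyT, hyx⟩ := mem_filter.1 hy
    obtain ⟨i, h, h0, rfl, hl, hr⟩ : y ∈ pinnacles l := by rw [hT]; exact hyT
    refine mem_image.2 ⟨i, mem_filter.2 ⟨mem_range.2 (by omega), h0, h, ?_⟩, hv i _⟩
    rw [hv (i - 1) (by omega), hv i (by omega), hv (i + 1) h]
    exact ⟨hl, hr, hyx⟩
  have hJne : J.Nonempty := by
    obtain ⟨i, hi, -⟩ := mem_image.1 (hcover (mem_filter.2 ⟨hx, le_rfl⟩))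
    exact ⟨i, hi⟩
  have hsep : ∀ i ∈ J, i + 1 ∉ J := by
    intro i hi hi1
    obtain ⟨-, -, -, hright, -⟩ := hJ i hi
    obtain ⟨-, -, hleft, -, -⟩ := hJ _ hi1
    simp only [Nat.add_sub_cancel] at hleft
    exact hright.asymm hleft
  have hnbhd : ∀ j ∈ J ∪ J.image (· - 1) ∪ J.image (· + 1), ∃ h : j < l.length, l[j] ≤ x := by
    simp only [mem_union, mem_image]
    rintro j ((hj | ⟨i, hi, rfl⟩) | ⟨i, hi, rfl⟩)
    · obtain ⟨-, hlt, -, -, hjx⟩ := hJ j hj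
      exact ⟨by omega, hv j _ ▸ hjx⟩
    · obtain ⟨-, hlt, hleft, -, hix⟩ := hJ i hi
      exact ⟨by omega, hv (i - 1) _ ▸ hleft.le.trans hix⟩
    · obtain ⟨-, hlt, -, hright, hix⟩ := hJ i hi
      exact ⟨hlt, hv (i + 1) _ ▸ hright.le.trans hix⟩
  calc 2 * #{y ∈ T | y ≤ x} ≤ 2 * #J :=
        Nat.mul_le_mul_left 2 ((card_le_card hcover).trans card_image_le)
    _ < #(J ∪ J.image (· - 1) ∪ J.image (· + 1)) :=
        two_mul_card_lt_card_union_image_pred_succ hJne (fun i hi => (hJ i hi).1) hsep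
    _ ≤ #{y ∈ l.toFinset | y ≤ x} := List.card_le_card_filter_toFinset hl hnbhd

theorem card_le_of_pinnacles_eq {l : List ℤ} (hl : l.Nodup) {T : Finset ℤ}
    (hT : pinnacles l = T) : #T ≤ (l.length - 1) / 2 := by
  rcases T.eq_empty_or_nonempty with rfl | hne
  · simp
  have hall : {y ∈ T | y ≤ T.max' hne} = T := filter_true_of_mem fun y hy => T.le_max' y hy
  have hlt := pinnacleCriterion_toFinset hl hT _ (T.max'_mem hne)
  rw [hall] at hlt
  have := (card_filter_le l.toFinset (· ≤ T.max' hne)).trans (List.toFinset_card_le l)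
  omega

theorem PinnacleCriterion.one_lt_card_filter_lt_min' {Y T : Finset ℤ} (h : PinnacleCriterion Y T)
    (hT : T.Nonempty) : 1 < #{y ∈ Y | y < T.min' hT} := by
  set q := T.min' hT
  have hTq : {y ∈ T | y ≤ q} = {q} :=
    eq_singleton_iff_unique_mem.2 ⟨mem_filter.2 ⟨T.min'_mem hT, le_rfl⟩,
      fun y hy => le_antisymm (mem_filter.1 hy).2 (T.min'_le y (mem_filter.1 hy).1)⟩
  have hsub : {y ∈ Y | y ≤ q} ⊆ insert q {y ∈ Y | y < q} := fun y hy => by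
    obtain ⟨hyY, hyq⟩ := mem_filter.1 hy
    rcases hyq.eq_or_lt with rfl | hlt
    exacts [mem_insert_self _ _, mem_insert_of_mem (mem_filter.2 ⟨hyY, hlt⟩)]
  have hcrit := h q (T.min'_mem hT)
  rw [hTq, card_singleton] at hcrit
  have := (card_le_card hsub).trans (card_insert_le _ _)
  omega

theorem PinnacleCriterion.erase_erase {Y T : Finset ℤ} (h : PinnacleCriterion Y T)
    (hTY : T ⊆ Y) {q a : ℤ} (hq : q ∈ T) (hqT : ∀ t ∈ T, q ≤ t) (ha : a ∈ Y) (haq : a < q) :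
    PinnacleCriterion ((Y.erase q).erase a) (T.erase q) := by
  intro x hx
  have hqx : q ≤ x := hqT x (mem_erase.1 hx).2
  have hTx : #{y ∈ T.erase q | y ≤ x} = #{y ∈ T | y ≤ x} - 1 := by
    rw [filter_erase, card_erase_of_mem (by simp [hq, hqx])]
  have hYx : #{y ∈ (Y.erase q).erase a | y ≤ x} = #{y ∈ Y | y ≤ x} - 1 - 1 := by
    rw [filter_erase, filter_erase, card_erase_of_mem, card_erase_of_mem]
    · simp [hTY hq, hqx]
    · simp [haq.ne, ha, haq.le.trans hqx]
  have := h x (mem_erase.1 hx).2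
  have : 0 < #{y ∈ T | y ≤ x} := card_pos.2 ⟨q, by simp [hq, hqx]⟩
  omega

theorem exists_list_pinnacles_eq (n : ℕ) :
    ∀ {Y T : Finset ℤ}, #T = n → T ⊆ Y → PinnacleCriterion Y T →
      ∃ l : List ℤ, l.Nodup ∧ l.toFinset = Y ∧ pinnacles l = T ∧ ∀ y ∈ l, l.head! ≤ y := by
  induction n with
  | zero =>
    intro Y T hT _ _
    obtain rfl := card_eq_zero.1 hT
    exact ⟨Y.sort, Y.sort_nodup _, Y.sort_toFinset _,
      by simpa using pinnacles_eq_empty_of_sortedLT Y.sortedLT_sort,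
      fun y hy => (Y.pairwise_sort _).head!_le hy⟩
  | succ n ih =>
    intro Y T hT hTY hcrit
    have hTne : T.Nonempty := card_pos.1 (by omega)
    set q := T.min' hTne
    have hqT : q ∈ T := T.min'_mem hTne
    -- `a` is written before the smallest pinnacle `q`; `b` forces the rest to start below `q`
    have hbelow : 1 < #{y ∈ Y | y < q} := hcrit.one_lt_card_filter_lt_min' hTne
    have hYne : Y.Nonempty := (card_pos.1 (by omega : 0 < #{y ∈ Y | y < q})).mono (filter_subset _ _)
    set a := Y.min' hYne
    have haY : a ∈ Y := Y.min'_mem hYne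
    obtain ⟨b, hb, hba⟩ := exists_mem_ne hbelow a
    obtain ⟨hbY, hbq⟩ := mem_filter.1 hb
    have haq : a < q := (Y.min'_le b hbY).trans_lt hbq
    set Y' := (Y.erase q).erase a
    have hTY' : T.erase q ⊆ Y' := fun y hy =>
      mem_erase.2 ⟨fun h => (T.min'_le a (h ▸ (mem_erase.1 hy).2)).not_gt haq,
        mem_erase.2 ⟨(mem_erase.1 hy).1, hTY (mem_erase.1 hy).2⟩⟩
    obtain ⟨l', hl', hl'Y, hl'T, hhead⟩ := ih (by rw [card_erase_of_mem hqT]; omega) hTY'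
      (hcrit.erase_erase hTY hqT (fun t ht => T.min'_le t ht) haY haq)
    have hbY' : b ∈ Y' := mem_erase.2 ⟨hba, mem_erase.2 ⟨hbq.ne, hbY⟩⟩
    obtain ⟨c, r, rfl⟩ : ∃ c r, l' = c :: r := by
      cases l' with
      | nil => simp [← hl'Y] at hbY'
      | cons c r => exact ⟨c, r, rfl⟩
    have hcq : c < q := (hhead b (by rwa [← List.mem_toFinset, hl'Y])).trans_lt hbq
    have hqY' : q ∉ c :: r := by simp [← List.mem_toFinset, hl'Y, Y']
    have haY' : a ∉ c :: r := by simp [← List.mem_toFinset, hl'Y, Y']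
    have hset : (a :: q :: c :: r).toFinset = Y := by
      rw [List.toFinset_cons, List.toFinset_cons, hl'Y, Finset.insert_comm,
        insert_erase (mem_erase.2 ⟨haq.ne, haY⟩), insert_erase (hTY hqT)]
    refine ⟨a :: q :: c :: r, ?_, hset, ?_, fun y hy => Y.min'_le y ?_⟩
    · exact List.nodup_cons.2 ⟨by simp [haq.ne, haY'], List.nodup_cons.2 ⟨hqY', hl'⟩⟩
    · rw [pinnacles_cons_cons_cons r haq hcq, hl'T, ← coe_insert, insert_erase hqT]
    · rwa [← hset, List.mem_toFinset]

theorem List.exists_ofFn_eq {l : List ℤ} {n : ℕ} (h : l.length = n) :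
    ∃ w : Fin n → ℤ, List.ofFn w = l := by
  subst h
  exact ⟨l.get, List.ofFn_get l⟩

theorem apsOn_iff {Y T : Finset ℤ} :
    APSOn Y T ↔ T ⊆ Y ∧ PinnacleCriterion Y T := by
  constructor
  · rintro ⟨w, hw, hwY, hT⟩
    rw [pinSet_eq_pinnacles_ofFn] at hT
    have hlY : (List.ofFn w).toFinset ⊆ Y := fun y hy => by
      obtain ⟨i, rfl⟩ := List.mem_ofFn.1 (List.mem_toFinset.1 hy)
      exact hwY i
    exact ⟨fun x hx => hlY (List.mem_toFinset.2 (mem_of_mem_pinnacles (hT ▸ hx))),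
      (pinnacleCriterion_toFinset (List.nodup_ofFn.2 hw) hT).mono hlY⟩
  · rintro ⟨hTY, hcrit⟩
    obtain ⟨l, hl, hlY, hlT, -⟩ := exists_list_pinnacles_eq _ rfl hTY hcrit
    obtain ⟨w, rfl⟩ := List.exists_ofFn_eq (n := #Y) (by rw [← hlY, List.toFinset_card_of_nodup hl])
    refine ⟨w, List.nodup_ofFn.1 hl, fun i => ?_, by rw [pinSet_eq_pinnacles_ofFn, hlT]⟩
    rw [← hlY, List.mem_toFinset, List.mem_ofFn]
    exact ⟨i, rfl⟩

theorem APSOn.exists_of_card_eq {Y T : Finset ℤ} (h : APSOn Y T) {n : ℕ} (hn : #Y = n) :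
    ∃ w : Fin n → ℤ, Function.Injective w ∧ (∀ i, w i ∈ Y) ∧ PinSet n w = T := by
  subst hn
  exact h

theorem apsOn_filter_lt_of_pinnacles_eq {l : List ℤ} (hl : l.Nodup) {T X : Finset ℤ}
    (hT : pinnacles l = T) {c : ℤ} (hX : ∀ y ∈ l, y < c → y ∈ X) :
    APSOn X {y ∈ T | y < c} := by
  refine apsOn_iff.2 ⟨fun y hy => ?_, fun x hx => ?_⟩
  · obtain ⟨hyT, hyc⟩ := mem_filter.1 hy
    exact hX y (mem_of_mem_pinnacles (hT ▸ hyT)) hyc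
  · have hxc := (mem_filter.1 hx).2
    have hbelow : {y ∈ {y ∈ T | y < c} | y ≤ x} = {y ∈ T | y ≤ x} := by
      rw [filter_filter]
      exact filter_congr fun y _ => ⟨And.right, fun h => ⟨h.trans_lt hxc, h⟩⟩
    rw [hbelow]
    refine (pinnacleCriterion_toFinset hl hT x (mem_filter.1 hx).1).trans_le (card_le_card ?_)
    intro y hy
    obtain ⟨hyl, hyx⟩ := mem_filter.1 hy
    exact mem_filter.2 ⟨hX y (List.mem_toFinset.1 hyl) (hyx.trans_lt hxc), hyx⟩

theorem APSOn.union_of_forall_lt {Y T P : Finset ℤ} (h : APSOn Y T)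
    (hPY : ∀ p ∈ P, ∀ y ∈ Y, y < p) (hcard : #T + #P ≤ (#Y + #P - 1) / 2) :
    APSOn (Y ∪ P) (T ∪ P) := by
  obtain ⟨hTY, hcrit⟩ := apsOn_iff.1 h
  have hYP : Disjoint Y P := disjoint_left.2 fun y hy hyP => (hPY y hyP y hy).false
  refine apsOn_iff.2 ⟨union_subset_union hTY subset_rfl, fun x hx => ?_⟩
  rw [filter_union, filter_union,
    card_union_of_disjoint (disjoint_filter_filter (hYP.mono_left hTY)),
    card_union_of_disjoint (disjoint_filter_filter hYP)]
  rcases mem_union.1 hx with hxT | hxP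
  · have hPx : {y ∈ P | y ≤ x} = ∅ :=
      filter_false_of_mem fun p hp => not_le.2 (hPY p hp x (hTY hxT))
    have := hcrit x hxT
    rw [hPx, card_empty]
    omega
  · have hYx : {y ∈ Y | y ≤ x} = Y := filter_true_of_mem fun y hy => (hPY x hxP y hy).le
    have := card_filter_le T (· ≤ x)
    have := card_filter_le P (· ≤ x)
    have := card_pos.2 ⟨x, hxP⟩
    rw [hYx]
    omega

noncomputable def negComplement (n : ℕ) (P : Finset ℤ) : Finset ℤ :=
  (Icc 1 (n : ℤ) \ P).image Neg.neg

theorem mem_negComplement {n : ℕ} {P : Finset ℤ} {y : ℤ} :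
    y ∈ negComplement n P ↔ 1 ≤ -y ∧ -y ≤ n ∧ -y ∉ P := by
  simp only [negComplement, mem_image, mem_sdiff, mem_Icc]
  constructor
  · rintro ⟨z, ⟨hz, hzP⟩, rfl⟩
    rw [neg_neg]
    exact ⟨hz.1, hz.2, hzP⟩
  · rintro ⟨h1, h2, hP⟩
    exact ⟨-y, ⟨⟨h1, h2⟩, hP⟩, neg_neg y⟩

theorem neg_of_mem_negComplement {n : ℕ} {P : Finset ℤ} {y : ℤ} (hy : y ∈ negComplement n P) :
    y < 0 := by
  have := (mem_negComplement.1 hy).1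
  omega

theorem card_negComplement_add {n : ℕ} {P : Finset ℤ} (hP : P ⊆ Icc 1 (n : ℤ)) :
    #(negComplement n P) + #P = n := by
  rw [negComplement, card_image_of_injective _ neg_injective, card_sdiff_of_subset hP,
    Int.card_Icc, Nat.sub_add_cancel (by simpa using card_le_card hP)]
  omega

theorem isSignedPerm_of_mem_negComplement_union {n : ℕ} {P : Finset ℤ}
    (hP : P ⊆ Icc 1 (n : ℤ)) {w : Fin n → ℤ} (hw : Function.Injective w)
    (hmem : ∀ i, w i ∈ negComplement n P ∪ P) : IsSignedPerm n w := by
  have hsign : ∀ i, (w i < 0 ∧ -w i ∉ P ∧ 1 ≤ -w i ∧ -w i ≤ n) ∨ (w i ∈ P ∧ 1 ≤ w i ∧ w i ≤ n) := by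
    intro i
    rcases mem_union.1 (hmem i) with h | h
    · obtain ⟨h1, h2, h3⟩ := mem_negComplement.1 h
      exact Or.inl ⟨by omega, h3, h1, h2⟩
    · exact Or.inr ⟨h, mem_Icc.1 (hP h)⟩
  refine ⟨fun i => ?_, fun i j hij => ?_⟩
  · rcases hsign i with ⟨hneg, -, h1, h2⟩ | ⟨-, h1, h2⟩
    · rw [abs_of_neg hneg]; exact ⟨h1, h2⟩
    · rw [abs_of_pos (by omega)]; exact ⟨h1, h2⟩
  · rcases abs_eq_abs.1 hij with h | h
    · exact hw h
    · exfalso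
      rcases hsign i with ⟨hi, hiP, -⟩ | ⟨hiP, hi, -⟩ <;>
        rcases hsign j with ⟨hj, hjP, -⟩ | ⟨hjP, hj, -⟩
      · omega
      · exact hiP (by rwa [h, neg_neg])
      · exact hjP (by rwa [← h])
      · omega

theorem neg_mem_negComplement {n : ℕ} {w : Fin n → ℤ} (hw : IsSignedPerm n w) {S : Finset ℤ}
    (hS : PinSet n w = S) {i : Fin n} (hi : w i < 0) :
    w i ∈ negComplement n {x ∈ S | 0 < x} := by
  obtain ⟨h1, h2⟩ := hw.1 i
  rw [abs_of_neg hi] at h1 h2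
  refine mem_negComplement.2 ⟨h1, h2, fun hP => ?_⟩
  obtain ⟨k, -, hk, hwk, -⟩ : -w i ∈ PinSet n w := hS ▸ (mem_filter.1 hP).1
  have : (⟨k, by omega⟩ : Fin n) = i := hw.2 (by simp only [hwk, abs_neg])
  rw [this] at hwk
  omega

theorem apsB_union_of_apsOn_negComplement {n : ℕ} {P N : Finset ℤ} (hP : P ⊆ Icc 1 (n : ℤ))
    (hcard : #P + #N ≤ (n - 1) / 2) (hN : APSOn (negComplement n P) N) : APSB n (N ∪ P) := by
  have hPX : ∀ p ∈ P, ∀ y ∈ negComplement n P, y < p := fun p hp y hy =>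
    (neg_of_mem_negComplement hy).trans_le (by linarith [(mem_Icc.1 (hP hp)).1])
  have hXP := card_negComplement_add hP
  obtain ⟨w, hw, hwY, hpin⟩ := (hN.union_of_forall_lt hPX (by omega)).exists_of_card_eq <| by
    rw [card_union_of_disjoint (disjoint_left.2 fun y hy hyP => (hPX y hyP y hy).false), hXP]
  exact ⟨w, isSignedPerm_of_mem_negComplement_union hP hw hwY, hpin⟩

theorem card_filter_pos_add_card_filter_neg {S : Finset ℤ} (h0 : (0 : ℤ) ∉ S) :
    #{x ∈ S | 0 < x} + #{x ∈ S | x < 0} = #S := by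
  rw [← card_filter_add_card_filter_not (s := S) (0 < ·)]
  congr 2
  exact filter_congr fun x hx => by
    have : x ≠ 0 := fun h => h0 (h ▸ hx)
    omega

theorem filter_pos_union_filter_neg {S : Finset ℤ} (h0 : (0 : ℤ) ∉ S) :
    {x ∈ S | x < 0} ∪ {x ∈ S | 0 < x} = S := by
  rw [← filter_or]
  exact filter_true_of_mem fun x hx => by
    have : x ≠ 0 := fun h => h0 (h ▸ hx)
    omega

theorem stmt4 (n : ℕ) (S : Finset ℤ) (hS : ∀ x ∈ S, -x ∉ S) :
    APSB n S ↔
      ((S.filter fun x => 0 < x).card + (S.filter fun x => x < 0).card ≤ (n - 1) / 2 ∧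
       (S.filter fun x => 0 < x) ⊆ Finset.Icc 1 (n : ℤ) ∧
       (S.filter fun x => x < 0) ⊆
         ((Finset.Icc 1 (n : ℤ)) \ (S.filter fun x => 0 < x)).image Neg.neg ∧
       APSOn (((Finset.Icc 1 (n : ℤ)) \ (S.filter fun x => 0 < x)).image Neg.neg)
         (S.filter fun x => x < 0)) := by
  have h0 : (0 : ℤ) ∉ S := fun h => hS 0 h (by simpa using h)
  set P := {x ∈ S | 0 < x}
  set N := {x ∈ S | x < 0}
  change APSB n S ↔ #P + #N ≤ (n - 1) / 2 ∧ P ⊆ Icc 1 (n : ℤ) ∧ N ⊆ negComplement n P ∧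
    APSOn (negComplement n P) N
  constructor
  · rintro ⟨w, hw, hpin⟩
    have hl := List.nodup_ofFn.2 fun i j hij => hw.2 (congrArg abs hij)
    have hpin' := (pinSet_eq_pinnacles_ofFn n w).symm.trans hpin
    have hN : APSOn (negComplement n P) N :=
      apsOn_filter_lt_of_pinnacles_eq hl hpin' fun y hy hy0 => by
        obtain ⟨i, rfl⟩ := List.mem_ofFn.1 hy
        exact neg_mem_negComplement hw hpin hy0
    refine ⟨?_, fun x hx => ?_, (apsOn_iff.1 hN).1, hN⟩
    · rw [card_filter_pos_add_card_filter_neg h0]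
      simpa using card_le_of_pinnacles_eq hl hpin'
    · obtain ⟨hxS, hx0⟩ := mem_filter.1 hx
      obtain ⟨i, rfl⟩ := List.mem_ofFn.1 (mem_of_mem_pinnacles (by rw [hpin']; exact hxS))
      rw [← abs_of_pos hx0, mem_Icc]
      exact hw.1 i
  · rintro ⟨hcard, hP, -, hN⟩
    have hNP : N ∪ P = S := filter_pos_union_filter_neg h0
    exact hNP ▸ apsB_union_of_apsOn_negComplement hP hcard hN
end

section
/- The number of admissible pinnacle sets of S_n containing n and of cardinality at most d equals the number of admissible pinnacle sets of S_{n-1} of cardinality at most d-1; the number of admissible pinnacle sets of S_n not containing n and of cardinality at most d equals the number of admissible pinnacle sets of S_{n-1} of cardinality at most d. Hence p_n(d) = p_{n-1}(d-1) + p_{n-1}(d), where p_n(d) counts admissible pinnacle sets of S_n of size at most d. -/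
open Finset

def Adm (n : ℕ) (S : Finset ℤ) : Prop :=
  ∀ x ∈ S, x ≤ (n:ℤ) ∧ 2 * ((S.filter (· ≤ x)).card : ℤ) < x

set_option maxHeartbeats 1000000 in
lemma aux_apsa_to_adm {n : ℕ} {S : Finset ℤ} (h : APSA n S) : Adm n S := by
  classical
  obtain ⟨w, ⟨hbound, hinj0⟩, hpos, hpin⟩ := h
  have habs : ∀ i, |w i| = w i := fun i => abs_of_pos (hpos i)
  have hinj : Function.Injective w := by
    intro i j hij
    apply hinj0
    simp only [habs, hij]
  have hwmem : ∀ i, w i ∈ Finset.Icc (1:ℤ) n := by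
    intro i
    have := hbound i
    rw [habs] at this
    exact Finset.mem_Icc.2 this
  intro x hx
  have hxpin : x ∈ PinSet n w := by rw [hpin]; exact_mod_cast hx
  -- position-level pinnacle predicate
  set Pin : Fin n → Prop := fun p =>
    ∃ (h0 : 0 < (p:ℕ)) (h2 : (p:ℕ)+1 < n),
      w ⟨(p:ℕ)-1, by omega⟩ < w p ∧ w ⟨(p:ℕ)+1, h2⟩ < w p with hPin
  have hmem_pin : ∀ y, y ∈ PinSet n w ↔ ∃ p : Fin n, Pin p ∧ w p = y := by
    intro y
    constructor
    · rintro ⟨i, h0, h2, hv, hl, hr⟩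
      exact ⟨⟨i, by omega⟩, ⟨h0, h2, hl, hr⟩, hv⟩
    · rintro ⟨p, ⟨h0, h2, hl, hr⟩, hv⟩
      exact ⟨(p:ℕ), h0, h2, hv, hl, hr⟩
  obtain ⟨px, hpxPin, hpxval⟩ := (hmem_pin x).1 hxpin
  have hxmem : x ∈ Finset.Icc (1:ℤ) n := hpxval ▸ hwmem px
  rw [Finset.mem_Icc] at hxmem
  refine ⟨hxmem.2, ?_⟩
  set P : Finset (Fin n) := Finset.univ.filter (fun p => Pin p ∧ w p ≤ x) with hP
  set Q : Finset (Fin n) := Finset.univ.filter (fun p => w p ≤ x) with hQ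
  have hPQ : P ⊆ Q := by
    intro p hp
    simp only [hP, hQ, Finset.mem_filter, Finset.mem_univ, true_and] at hp ⊢
    exact hp.2
  -- Q has exactly x elements
  have himg : Finset.image w Finset.univ = Finset.Icc (1:ℤ) n := by
    apply Finset.eq_of_subset_of_card_le
    · intro y hy
      obtain ⟨i, _, rfl⟩ := Finset.mem_image.1 hy
      exact hwmem i
    · rw [Finset.card_image_of_injective _ hinj, Finset.card_univ, Fintype.card_fin,
        Int.card_Icc]
      simp
  have hQcard : (Q.card : ℤ) = x := by
    have hmemIcc : ∀ y, y ∈ Finset.Icc (1:ℤ) n ↔ ∃ p, w p = y := by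
      intro y
      rw [← himg]
      simp
    have h1 : Q.image w = (Finset.Icc (1:ℤ) n).filter (· ≤ x) := by
      ext y
      simp only [hQ, Finset.mem_image, Finset.mem_filter, Finset.mem_univ, true_and, hmemIcc]
      constructor
      · rintro ⟨p, hp, rfl⟩
        exact ⟨⟨p, rfl⟩, hp⟩
      · rintro ⟨⟨p, rfl⟩, hp⟩
        exact ⟨p, hp, rfl⟩
    have h2 : (Finset.Icc (1:ℤ) n).filter (· ≤ x) = Finset.Icc (1:ℤ) x := by
      ext y
      simp only [Finset.mem_filter, Finset.mem_Icc]
      constructor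
      · rintro ⟨⟨a, b⟩, c⟩; exact ⟨a, c⟩
      · rintro ⟨a, b⟩; exact ⟨⟨a, le_trans b hxmem.2⟩, b⟩
    have : Q.card = (Finset.Icc (1:ℤ) x).card := by
      rw [← h2, ← h1, Finset.card_image_of_injective _ hinj]
    rw [this, Int.card_Icc]
    omega
  -- P is in bijection with S.filter (· ≤ x)
  have hPcard : P.card = (S.filter (· ≤ x)).card := by
    apply Finset.card_bij (fun p _ => w p)
    · intro p hp
      simp only [hP, Finset.mem_filter, Finset.mem_univ, true_and] at hp
      refine Finset.mem_filter.2 ⟨?_, hp.2⟩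
      have : w p ∈ PinSet n w := (hmem_pin (w p)).2 ⟨p, hp.1, rfl⟩
      rw [hpin] at this
      exact_mod_cast this
    · intro p _ p' _ hpp
      exact hinj hpp
    · intro y hy
      rw [Finset.mem_filter] at hy
      have : y ∈ PinSet n w := by rw [hpin]; exact_mod_cast hy.1
      obtain ⟨p, hp1, hp2⟩ := (hmem_pin y).1 this
      refine ⟨p, ?_, hp2⟩
      simp only [hP, Finset.mem_filter, Finset.mem_univ, true_and]
      exact ⟨hp1, hp2 ▸ hy.2⟩
  -- pass to ℕ positions
  set Pn : Finset ℕ := P.image Fin.val with hPn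
  set Qn : Finset ℕ := Q.image Fin.val with hQn
  have hPncard : Pn.card = P.card := Finset.card_image_of_injective _ Fin.val_injective
  have hQncard : Qn.card = Q.card := Finset.card_image_of_injective _ Fin.val_injective
  have hPnQn : Pn ⊆ Qn := Finset.image_subset_image hPQ
  have hPnne : Pn.Nonempty := by
    refine ⟨(px:ℕ), Finset.mem_image.2 ⟨px, ?_, rfl⟩⟩
    simp only [hP, Finset.mem_filter, Finset.mem_univ, true_and]
    exact ⟨hpxPin, le_of_eq hpxval⟩
  set m := Pn.min' hPnne with hm
  have hmmem : m ∈ Pn := Finset.min'_mem _ _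
  obtain ⟨pm, hpmP, hpmval⟩ := Finset.mem_image.1 hmmem
  have hpmP' := hpmP
  simp only [hP, Finset.mem_filter, Finset.mem_univ, true_and] at hpmP'
  obtain ⟨⟨h0m, h2m, hlm, hrm⟩, hwm⟩ := hpmP'
  -- facts about successors of pinnacle positions
  have hsuccQ : ∀ p ∈ P, (p:ℕ)+1 ∈ Qn := by
    intro p hp
    simp only [hP, Finset.mem_filter, Finset.mem_univ, true_and] at hp
    obtain ⟨⟨h0, h2, hl, hr⟩, hle⟩ := hp
    refine Finset.mem_image.2 ⟨⟨(p:ℕ)+1, h2⟩, ?_, rfl⟩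
    simp only [hQ, Finset.mem_filter, Finset.mem_univ, true_and]
    exact le_trans (le_of_lt hr) hle
  have hsuccP : ∀ p ∈ P, (p:ℕ)+1 ∉ Pn := by
    intro p hp hcon
    simp only [hP, Finset.mem_filter, Finset.mem_univ, true_and] at hp
    obtain ⟨⟨h0, h2, hl, hr⟩, hle⟩ := hp
    obtain ⟨q, hq, hqval⟩ := Finset.mem_image.1 hcon
    simp only [hP, Finset.mem_filter, Finset.mem_univ, true_and] at hq
    obtain ⟨⟨h0', h2', hl', hr'⟩, hle'⟩ := hq
    have e1 : w ⟨(q:ℕ)-1, by omega⟩ = w p := by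
      have h : (⟨(q:ℕ)-1, by omega⟩ : Fin n) = p := by
        apply Fin.ext
        simp only [Fin.val_mk]
        omega
      rw [h]
    have e2 : w ⟨(p:ℕ)+1, h2⟩ = w q := by
      have h : (⟨(p:ℕ)+1, h2⟩ : Fin n) = q := by
        apply Fin.ext
        simp only [Fin.val_mk]
        omega
      rw [h]
    rw [e1] at hl'
    rw [e2] at hr
    omega
  set E : Finset ℕ := insert (m-1) (Pn.image Nat.succ) with hE
  have hEsub : E ⊆ Qn \ Pn := by
    intro a ha
    rw [hE, Finset.mem_insert] at ha
    rcases ha with rfl | ha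
    · rw [Finset.mem_sdiff]
      constructor
      · refine Finset.mem_image.2 ⟨⟨m-1, by omega⟩, ?_, by simp⟩
        simp only [hQ, Finset.mem_filter, Finset.mem_univ, true_and]
        have e1 : w ⟨m-1, by omega⟩ = w ⟨(pm:ℕ)-1, by omega⟩ := by
          have h : (⟨m-1, by omega⟩ : Fin n) = ⟨(pm:ℕ)-1, by omega⟩ := by
            apply Fin.ext
            simp only [Fin.val_mk]
            omega
          rw [h]
        have e2 : w pm ≤ x := hwm
        rw [e1]
        have : w ⟨(pm:ℕ)-1, by omega⟩ < w pm := hlm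
        omega
      · intro hcon
        have := Finset.min'_le _ _ hcon
        omega
    · obtain ⟨a', ha', rfl⟩ := Finset.mem_image.1 ha
      obtain ⟨p, hp, hpval⟩ := Finset.mem_image.1 ha'
      rw [Finset.mem_sdiff]
      constructor
      · have := hsuccQ p hp
        rw [hpval] at this
        exact this
      · have := hsuccP p hp
        rw [hpval] at this
        exact this
  have hEcard : E.card = Pn.card + 1 := by
    rw [hE, Finset.card_insert_of_notMem, Finset.card_image_of_injective _ Nat.succ_injective]
    intro hcon
    obtain ⟨a, ha, hav⟩ := Finset.mem_image.1 hcon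
    have h1 := Finset.min'_le _ _ ha
    omega
  have hfin : Pn.card + 1 ≤ Qn.card - Pn.card := by
    have := Finset.card_le_card hEsub
    rw [Finset.card_sdiff_of_subset hPnQn] at this
    omega
  have hcardle : Pn.card ≤ Qn.card := Finset.card_le_card hPnQn
  have hkey : 2 * P.card + 1 ≤ Q.card := by omega
  have h2 : (2 : ℤ) * P.card + 1 ≤ (Q.card : ℤ) := by exact_mod_cast hkey
  rw [hQcard] at h2
  rw [← hPcard]
  omega

lemma aux_orderIso_lt_iff (A : Finset ℤ) (k : ℕ) (h : A.card = k) (j : Fin k) (c : ℤ) :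
    ((A.orderIsoOfFin h j : ℤ) < c) ↔ (j : ℕ) < (A.filter (· < c)).card := by
  classical
  set f := A.orderIsoOfFin h with hf
  have hcard : (Finset.univ.filter (fun i : Fin k => (f i : ℤ) < c)).card
      = (A.filter (· < c)).card := by
    apply Finset.card_bij (fun i _ => (f i : ℤ))
    · intro i hi
      simp only [mem_filter, mem_univ, true_and] at hi ⊢
      exact ⟨(f i).2, hi⟩
    · intro i _ i' _ hii
      exact f.injective (Subtype.ext hii)
    · intro a ha
      simp only [mem_filter] at ha
      refine ⟨f.symm ⟨a, ha.1⟩, ?_, ?_⟩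
      · simp [ha.2]
      · simp
  constructor
  · intro hlt
    have hsub : Finset.Iic j ⊆ Finset.univ.filter (fun i : Fin k => (f i : ℤ) < c) := by
      intro i hi
      simp only [mem_Iic] at hi
      simp only [mem_filter, mem_univ, true_and]
      calc (f i : ℤ) ≤ (f j : ℤ) := by exact_mod_cast f.monotone hi
        _ < c := hlt
    have := Finset.card_le_card hsub
    rw [Fin.card_Iic, hcard] at this
    omega
  · intro hlt
    by_contra hge
    push_neg at hge
    have hsub : Finset.univ.filter (fun i : Fin k => (f i : ℤ) < c) ⊆ Finset.Iio j := by
      intro i hi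
      simp only [mem_filter, mem_univ, true_and] at hi
      simp only [mem_Iio]
      by_contra hij
      push_neg at hij
      have : (f j : ℤ) ≤ (f i : ℤ) := by exact_mod_cast f.monotone hij
      omega
    have := Finset.card_le_card hsub
    rw [Fin.card_Iio, hcard] at this
    omega

set_option maxHeartbeats 2000000 in
lemma aux_adm_to_apsa {n : ℕ} {S : Finset ℤ} (h : Adm n S) : APSA n S := by
  classical
  set k := S.card with hk
  have hS_range : ∀ x ∈ S, 1 ≤ x ∧ x ≤ (n:ℤ) := by
    intro x hx
    obtain ⟨h1, h2⟩ := h x hx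
    have h0 : (0:ℤ) ≤ 2 * ((S.filter (· ≤ x)).card : ℤ) := by positivity
    exact ⟨by omega, h1⟩
  have hSsub : S ⊆ Finset.Icc (1:ℤ) n := fun x hx => Finset.mem_Icc.2 (hS_range x hx)
  set B := Finset.Icc (1:ℤ) n \ S with hB
  have hIccCard : (Finset.Icc (1:ℤ) (n:ℤ)).card = n := by
    rw [Int.card_Icc]
    simp
  have hBcard : B.card = n - k := by
    rw [hB, Finset.card_sdiff_of_subset hSsub, hIccCard, hk]
  -- sorted enumeration of S
  set sv : ℕ → ℤ := fun t => if ht : t < k then (S.orderIsoOfFin hk.symm ⟨t, ht⟩ : ℤ) else 0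
    with hsv
  set bv : ℕ → ℤ := fun t => if ht : t < n - k then (B.orderIsoOfFin hBcard ⟨t, ht⟩ : ℤ) else 0
    with hbv
  have hsv_mem : ∀ t, t < k → sv t ∈ S := by
    intro t ht
    rw [hsv]
    simp only [dif_pos ht]
    exact (S.orderIsoOfFin hk.symm ⟨t, ht⟩).2
  have hbv_mem : ∀ t, t < n - k → bv t ∈ B := by
    intro t ht
    rw [hbv]
    simp only [dif_pos ht]
    exact (B.orderIsoOfFin hBcard ⟨t, ht⟩).2
  have hsv_mono : ∀ t u, t < u → u < k → sv t < sv u := by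
    intro t u htu hu
    have ht : t < k := by omega
    rw [hsv]
    simp only [dif_pos ht, dif_pos hu]
    exact_mod_cast (S.orderIsoOfFin hk.symm).strictMono
      (show (⟨t, ht⟩ : Fin k) < ⟨u, hu⟩ from by simp [Fin.mk_lt_mk]; omega)
  have hbv_mono : ∀ t u, t < u → u < n - k → bv t < bv u := by
    intro t u htu hu
    have ht : t < n - k := by omega
    rw [hbv]
    simp only [dif_pos ht, dif_pos hu]
    exact_mod_cast (B.orderIsoOfFin hBcard).strictMono
      (show (⟨t, ht⟩ : Fin (n-k)) < ⟨u, hu⟩ from by simp [Fin.mk_lt_mk]; omega)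
  have hsv_surj : ∀ x ∈ S, ∃ t, ∃ (ht : t < k), sv t = x := by
    intro x hx
    refine ⟨((S.orderIsoOfFin hk.symm).symm ⟨x, hx⟩ : Fin k), Fin.isLt _, ?_⟩
    rw [hsv]
    simp only [dif_pos (Fin.isLt _)]
    have : (⟨((S.orderIsoOfFin hk.symm).symm ⟨x, hx⟩ : Fin k), Fin.isLt _⟩ : Fin k)
        = (S.orderIsoOfFin hk.symm).symm ⟨x, hx⟩ := rfl
    rw [this]
    simp
  -- counting: elements of S strictly below sv t
  have hCS' : ∀ t, t < k → (S.filter (· < sv t)).card = t := by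
    intro t ht
    have hsvt : sv t = (S.orderIsoOfFin hk.symm ⟨t, ht⟩ : ℤ) := by
      rw [hsv]; simp only [dif_pos ht]
    have hub : (S.filter (· < sv t)).card ≤ t := by
      by_contra hc
      push_neg at hc
      have := (aux_orderIso_lt_iff S k hk.symm ⟨t, ht⟩ (sv t)).2 hc
      rw [← hsvt] at this
      omega
    have hlb : t ≤ (S.filter (· < sv t)).card := by
      rcases Nat.eq_zero_or_pos t with rfl | htpos
      · omega
      · have ht1 : t - 1 < k := by omega
        have hm : sv (t-1) < sv t := hsv_mono (t-1) t (by omega) ht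
        have := (aux_orderIso_lt_iff S k hk.symm ⟨t-1, ht1⟩ (sv t)).1 (by
          have e : sv (t-1) = (S.orderIsoOfFin hk.symm ⟨t-1, ht1⟩ : ℤ) := by
            rw [hsv]; simp only [dif_pos ht1]
          rw [← e]; exact hm)
        simp only [Fin.val_mk] at this
        omega
    omega
  have hCS : ∀ t, t < k → (S.filter (· ≤ sv t)).card = t + 1 := by
    intro t ht
    have hfeq : S.filter (· ≤ sv t) = insert (sv t) (S.filter (· < sv t)) := by
      ext y
      simp only [Finset.mem_filter, Finset.mem_insert]
      constructor
      · rintro ⟨hy, hy2⟩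
        rcases lt_or_eq_of_le hy2 with h' | h'
        · exact Or.inr ⟨hy, h'⟩
        · exact Or.inl h'
      · rintro (rfl | ⟨hy, hy2⟩)
        · exact ⟨hsv_mem t ht, le_refl _⟩
        · exact ⟨hy, le_of_lt hy2⟩
    rw [hfeq, Finset.card_insert_of_notMem (by simp), hCS' t ht]
  -- the admissibility inequality in sorted form
  have hadm2 : ∀ t, t < k → 2 * (t:ℤ) + 3 ≤ sv t := by
    intro t ht
    have := (h (sv t) (hsv_mem t ht)).2
    rw [hCS t ht] at this
    push_cast at this
    omega
  have hsv_le_n : ∀ t, t < k → sv t ≤ (n:ℤ) := fun t ht => (hS_range _ (hsv_mem t ht)).2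
  have h2k : k = 0 ∨ 2 * k < n := by
    rcases Nat.eq_zero_or_pos k with h0 | h0
    · exact Or.inl h0
    · right
      have h1 := hadm2 (k-1) (by omega)
      have h2 := hsv_le_n (k-1) (by omega)
      have : 2 * ((k:ℤ) - 1) + 3 ≤ (n:ℤ) := by
        have e : ((k-1 : ℕ) : ℤ) = (k:ℤ) - 1 := by push_cast [Nat.cast_sub h0]; ring
        rw [e] at h1
        omega
      omega
  have hkn : k ≤ n - k := by omega
  -- counting elements of B below sv t
  have hfiltB : ∀ t, t < k → ((B.filter (· < sv t)).card : ℤ) = sv t - 1 - t := by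
    intro t ht
    have hsub : S.filter (· < sv t) ⊆ (Finset.Icc (1:ℤ) n).filter (· < sv t) :=
      Finset.filter_subset_filter _ hSsub
    have hBf : B.filter (· < sv t)
        = (Finset.Icc (1:ℤ) n).filter (· < sv t) \ S.filter (· < sv t) := by
      rw [hB]
      ext y
      simp only [Finset.mem_filter, Finset.mem_sdiff]
      tauto
    have hIf : (Finset.Icc (1:ℤ) n).filter (· < sv t) = Finset.Icc (1:ℤ) (sv t - 1) := by
      ext y
      simp only [Finset.mem_filter, Finset.mem_Icc]
      have := hsv_le_n t ht
      constructor
      · rintro ⟨⟨a, b⟩, c⟩; omega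
      · rintro ⟨a, b⟩; refine ⟨⟨a, by omega⟩, by omega⟩
    rw [hBf, Finset.card_sdiff_of_subset hsub, hIf, hCS' t ht, Int.card_Icc]
    have h3 := hadm2 t ht
    have hle : t ≤ (Finset.Icc (1:ℤ) (sv t - 1)).card := by
      rw [Int.card_Icc]
      omega
    omega
  have hbv_lt : ∀ t u, t < k → u ≤ t + 1 → u < n - k ∧ bv u < sv t := by
    intro t u ht hu
    have hc := hfiltB t ht
    have h3 := hadm2 t ht
    have hcard : t + 2 ≤ (B.filter (· < sv t)).card := by omega
    have hfB : (B.filter (· < sv t)).card ≤ n - k := by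
      rw [← hBcard]
      exact Finset.card_le_card (Finset.filter_subset _ _)
    have hun : u < n - k := by omega
    refine ⟨hun, ?_⟩
    have := (aux_orderIso_lt_iff B (n-k) hBcard ⟨u, hun⟩ (sv t)).2 (by
      simp only [Fin.val_mk]; omega)
    rw [hbv]
    simp only [dif_pos hun]
    exact this
  -- the word
  set w : Fin n → ℤ := fun j =>
    if (j:ℕ) < 2*k ∧ (j:ℕ) % 2 = 1 then sv ((j:ℕ)/2)
    else if (j:ℕ) < 2*k then bv ((j:ℕ)/2) else bv ((j:ℕ)-k) with hw
  -- evaluation lemmas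
  have ev_odd : ∀ (i : ℕ) (hi : i < n), i % 2 = 1 → i < 2*k → w ⟨i, hi⟩ = sv (i/2) := by
    intro i hi h1 h2
    rw [hw]
    simp only [Fin.val_mk]
    rw [if_pos ⟨h2, h1⟩]
  have ev_b : ∀ (i : ℕ) (hi : i < n), i % 2 = 0 ∨ 2*k ≤ i →
      w ⟨i, hi⟩ = bv (if i < 2*k then i/2 else i - k) := by
    intro i hi hcase
    rw [hw]
    simp only [Fin.val_mk]
    by_cases h2 : i < 2*k
    · rw [if_neg (by omega), if_pos h2, if_pos h2]
    · rw [if_neg (by omega), if_neg h2, if_neg h2]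
  -- index bound for b-branch
  have hidx_lt : ∀ (i : ℕ), i < n → (i % 2 = 0 ∨ 2*k ≤ i) →
      (if i < 2*k then i/2 else i - k) < n - k := by
    intro i hi hcase
    by_cases h2 : i < 2*k
    · rw [if_pos h2]; omega
    · rw [if_neg h2]; omega
  -- every value is in Icc 1 n, and positive
  have hB_range : ∀ y ∈ B, 1 ≤ y ∧ y ≤ (n:ℤ) := by
    intro y hy
    rw [hB, Finset.mem_sdiff, Finset.mem_Icc] at hy
    exact hy.1
  have hw_range : ∀ j : Fin n, 1 ≤ w j ∧ w j ≤ (n:ℤ) := by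
    intro j
    have hj : j = ⟨(j:ℕ), j.isLt⟩ := rfl
    by_cases hc : (j:ℕ) < 2*k ∧ (j:ℕ) % 2 = 1
    · rw [hj, ev_odd (j:ℕ) j.isLt hc.2 hc.1]
      exact hS_range _ (hsv_mem _ (by omega))
    · have hcase : (j:ℕ) % 2 = 0 ∨ 2*k ≤ (j:ℕ) := by omega
      rw [hj, ev_b (j:ℕ) j.isLt hcase]
      exact hB_range _ (hbv_mem _ (hidx_lt (j:ℕ) j.isLt hcase))
  have hdisjSB : ∀ y, y ∈ S → y ∈ B → False := by
    intro y hyS hyB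
    rw [hB, Finset.mem_sdiff] at hyB
    exact hyB.2 hyS
  -- injectivity
  have hw_inj : Function.Injective w := by
    intro i j hij
    have hi' : i = ⟨(i:ℕ), i.isLt⟩ := rfl
    have hj' : j = ⟨(j:ℕ), j.isLt⟩ := rfl
    by_cases hci : (i:ℕ) < 2*k ∧ (i:ℕ) % 2 = 1 <;>
      by_cases hcj : (j:ℕ) < 2*k ∧ (j:ℕ) % 2 = 1
    · -- both s-values
      rw [hi', ev_odd (i:ℕ) i.isLt hci.2 hci.1] at hij
      rw [hj', ev_odd (j:ℕ) j.isLt hcj.2 hcj.1] at hij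
      have : (i:ℕ)/2 = (j:ℕ)/2 := by
        by_contra hne
        rcases Nat.lt_or_ge ((i:ℕ)/2) ((j:ℕ)/2) with h' | h'
        · have := hsv_mono _ _ h' (by omega)
          omega
        · have h'' : (j:ℕ)/2 < (i:ℕ)/2 := by omega
          have := hsv_mono _ _ h'' (by omega)
          omega
      exact Fin.ext (by omega)
    · -- s-value = b-value, impossible
      exfalso
      rw [hi', ev_odd (i:ℕ) i.isLt hci.2 hci.1] at hij
      rw [hj', ev_b (j:ℕ) j.isLt (by omega)] at hij
      exact hdisjSB _ (hsv_mem _ (by omega))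
        (hij ▸ hbv_mem _ (hidx_lt (j:ℕ) j.isLt (by omega)))
    · exfalso
      rw [hj', ev_odd (j:ℕ) j.isLt hcj.2 hcj.1] at hij
      rw [hi', ev_b (i:ℕ) i.isLt (by omega)] at hij
      exact hdisjSB _ (hsv_mem _ (by omega))
        (hij ▸ hbv_mem _ (hidx_lt (i:ℕ) i.isLt (by omega)))
    · -- both b-values
      rw [hi', ev_b (i:ℕ) i.isLt (by omega)] at hij
      rw [hj', ev_b (j:ℕ) j.isLt (by omega)] at hij
      have hι : (if (i:ℕ) < 2*k then (i:ℕ)/2 else (i:ℕ) - k)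
          = (if (j:ℕ) < 2*k then (j:ℕ)/2 else (j:ℕ) - k) := by
        by_contra hne
        set a := (if (i:ℕ) < 2*k then (i:ℕ)/2 else (i:ℕ) - k) with ha
        set b := (if (j:ℕ) < 2*k then (j:ℕ)/2 else (j:ℕ) - k) with hbdef
        have hai : a < n - k := hidx_lt (i:ℕ) i.isLt (by omega)
        have hbi : b < n - k := hidx_lt (j:ℕ) j.isLt (by omega)
        rcases Nat.lt_or_ge a b with h' | h'
        · have := hbv_mono a b h' hbi
          omega
        · have h'' : b < a := by omega
          have := hbv_mono b a h'' hai
          omega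
      apply Fin.ext
      by_cases h2i : (i:ℕ) < 2*k <;> by_cases h2j : (j:ℕ) < 2*k
      · rw [if_pos h2i, if_pos h2j] at hι
        omega
      · rw [if_pos h2i, if_neg h2j] at hι
        omega
      · rw [if_neg h2i, if_pos h2j] at hι
        omega
      · rw [if_neg h2i, if_neg h2j] at hι
        omega
  -- pinnacle set equality
  have hpin : PinSet n w = ↑S := by
    ext x
    simp only [PinSet, Set.mem_setOf_eq, Finset.coe_sort_coe, Finset.mem_coe]
    constructor
    · rintro ⟨i, h0, h2, hval, hl, hr⟩
      by_cases hc : i < 2*k ∧ i % 2 = 1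
      · rw [ev_odd i (by omega) hc.2 hc.1] at hval
        rw [← hval]
        exact hsv_mem _ (by omega)
      · exfalso
        have hcase : i % 2 = 0 ∨ 2*k ≤ i := by omega
        rcases hcase with he | hge
        · by_cases h2i : i < 2*k
          · -- even position < 2k: right neighbor is the bigger s-value
            have hi1 : i + 1 < 2*k := by omega
            have hodd : (i+1) % 2 = 1 := by omega
            rw [ev_b i (by omega) (Or.inl he)] at hr
            rw [ev_odd (i+1) h2 hodd hi1] at hr
            rw [if_pos h2i] at hr
            have he2 : (i+1)/2 = i/2 := by omega
            rw [he2] at hr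
            have := hbv_lt (i/2) (i/2) (by omega) (by omega)
            omega
          · -- tail position: ascending
            have hge' : 2*k ≤ i := by omega
            rw [ev_b i (by omega) (Or.inr hge')] at hr
            rw [ev_b (i+1) h2 (Or.inr (by omega))] at hr
            rw [if_neg h2i, if_neg (by omega : ¬ (i+1 < 2*k))] at hr
            have := hbv_mono (i-k) (i+1-k) (by omega) (by omega)
            omega
        · -- i ≥ 2k (subsumes part of above, but handle): tail ascending
          rw [ev_b i (by omega) (Or.inr hge)] at hr
          rw [ev_b (i+1) h2 (Or.inr (by omega))] at hr
          rw [if_neg (by omega : ¬ (i < 2*k)), if_neg (by omega : ¬ (i+1 < 2*k))] at hr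
          have := hbv_mono (i-k) (i+1-k) (by omega) (by omega)
          omega
    · intro hx
      obtain ⟨t, ht, hsvt⟩ := hsv_surj x hx
      have hkpos : 1 ≤ k := by omega
      have h2kn : 2*k < n := by omega
      refine ⟨2*t+1, by omega, by omega, ?_, ?_, ?_⟩
      · rw [ev_odd (2*t+1) (by omega) (by omega) (by omega)]
        have : (2*t+1)/2 = t := by omega
        rw [this, hsvt]
      · -- left neighbor: bv t < sv t
        have e1 : (2*t+1) - 1 = 2*t := by omega
        rw [show ((⟨2*t+1-1, by omega⟩ : Fin n)) = ⟨2*t, by omega⟩ from Fin.ext (by simp)]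
        rw [ev_b (2*t) (by omega) (Or.inl (by omega))]
        rw [ev_odd (2*t+1) (by omega) (by omega) (by omega)]
        rw [if_pos (by omega : 2*t < 2*k)]
        have e2 : (2*t)/2 = t := by omega
        have e3 : (2*t+1)/2 = t := by omega
        rw [e2, e3]
        exact (hbv_lt t t ht (by omega)).2
      · -- right neighbor: bv (t+1) < sv t
        rw [ev_odd (2*t+1) (by omega) (by omega) (by omega)]
        rw [ev_b (2*t+1+1) (by omega) (by omega)]
        have e3 : (2*t+1)/2 = t := by omega
        rw [e3]
        have e4 : (if 2*t+1+1 < 2*k then (2*t+1+1)/2 else (2*t+1+1) - k) = t + 1 := by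
          by_cases hc : 2*t+1+1 < 2*k
          · rw [if_pos hc]; omega
          · rw [if_neg hc]; omega
        rw [e4]
        exact (hbv_lt t (t+1) ht (by omega)).2
  -- assemble
  refine ⟨w, ⟨?_, ?_⟩, ?_, hpin⟩
  · intro i
    have := hw_range i
    rw [abs_of_pos (by omega)]
    exact ⟨by omega, this.2⟩
  · intro i j hij
    apply hw_inj
    have hi := hw_range i
    have hj := hw_range j
    simp only at hij
    rw [abs_of_pos (by omega), abs_of_pos (by omega)] at hij
    exact hij
  · intro i
    have := hw_range i
    omega

lemma aux_apsa_iff_adm {n : ℕ} {S : Finset ℤ} : APSA n S ↔ Adm n S :=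
  ⟨aux_apsa_to_adm, aux_adm_to_apsa⟩

lemma aux_adm_finite (n : ℕ) (P : Finset ℤ → Prop) :
    {S : Finset ℤ | Adm n S ∧ P S}.Finite := by
  classical
  apply Set.Finite.subset ((Finset.Icc (1:ℤ) n).powerset).finite_toSet
  intro S hS
  obtain ⟨hA, _⟩ := hS
  simp only [Finset.coe_powerset, Set.mem_preimage, Set.mem_powerset_iff, Finset.coe_subset,
    Finset.mem_coe, Finset.mem_powerset]
  intro x hx
  obtain ⟨h1, h2⟩ := hA x hx
  have h0 : (0:ℤ) ≤ 2 * ((S.filter (· ≤ x)).card : ℤ) := by positivity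
  exact Finset.mem_Icc.2 ⟨by omega, h1⟩

theorem stmt7 (n : ℕ) (d : ℤ) (hd0 : 0 ≤ d) (hd : d ≤ ((n : ℤ) - 1) / 2) :
    ({S : Finset ℤ | APSA n S ∧ (n : ℤ) ∈ S ∧ (S.card : ℤ) ≤ d}.ncard
        = {S : Finset ℤ | APSA (n - 1) S ∧ (S.card : ℤ) ≤ d - 1}.ncard) ∧
    ({S : Finset ℤ | APSA n S ∧ (n : ℤ) ∉ S ∧ (S.card : ℤ) ≤ d}.ncard
        = {S : Finset ℤ | APSA (n - 1) S ∧ (S.card : ℤ) ≤ d}.ncard) ∧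
    ({S : Finset ℤ | APSA n S ∧ (S.card : ℤ) ≤ d}.ncard
        = {S : Finset ℤ | APSA (n - 1) S ∧ (S.card : ℤ) ≤ d - 1}.ncard
          + {S : Finset ℤ | APSA (n - 1) S ∧ (S.card : ℤ) ≤ d}.ncard) := by
  classical
  have hn : 1 ≤ n := by
    rcases Nat.eq_zero_or_pos n with rfl | h
    · exfalso
      have he : (((0:ℕ) : ℤ) - 1) / 2 = -1 := by decide
      rw [he] at hd
      omega
    · exact h
  have hcast : ((n - 1 : ℕ) : ℤ) = (n : ℤ) - 1 := by
    push_cast [hn]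
    ring
  have h2d : 2 * d ≤ (n : ℤ) - 1 := by omega
  -- replace APSA by Adm everywhere
  have hrw : ∀ (m : ℕ) (P : Finset ℤ → Prop),
      {S : Finset ℤ | APSA m S ∧ P S} = {S : Finset ℤ | Adm m S ∧ P S} := by
    intro m P
    ext S
    simp only [Set.mem_setOf_eq, aux_apsa_iff_adm]
  -- part 2 : literal set equality
  have hset2 : {S : Finset ℤ | Adm n S ∧ (n : ℤ) ∉ S ∧ (S.card : ℤ) ≤ d}
      = {S : Finset ℤ | Adm (n-1) S ∧ (S.card : ℤ) ≤ d} := by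
    ext S
    simp only [Set.mem_setOf_eq]
    constructor
    · rintro ⟨hA, hnot, hcard⟩
      refine ⟨?_, hcard⟩
      intro x hx
      obtain ⟨h1, h2⟩ := hA x hx
      have hne : x ≠ (n:ℤ) := fun he => hnot (he ▸ hx)
      exact ⟨by rw [hcast]; omega, h2⟩
    · rintro ⟨hA, hcard⟩
      have hxlt : ∀ x ∈ S, x ≤ (n:ℤ) - 1 := by
        intro x hx
        have := (hA x hx).1
        rw [hcast] at this
        exact this
      refine ⟨?_, ?_, hcard⟩
      · intro x hx
        exact ⟨by have := hxlt x hx; omega, (hA x hx).2⟩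
      · intro hmem
        have := hxlt _ hmem
        omega
  -- part 1 : bijection via erasing n
  have hinj : Set.InjOn (fun S : Finset ℤ => S.erase (n:ℤ))
      {S : Finset ℤ | Adm n S ∧ (n : ℤ) ∈ S ∧ (S.card : ℤ) ≤ d} := by
    intro S hS T hT hST
    simp only [Set.mem_setOf_eq] at hS hT
    have hST' : S.erase (n:ℤ) = T.erase (n:ℤ) := hST
    have : insert ((n:ℤ)) (S.erase n) = insert ((n:ℤ)) (T.erase n) := by rw [hST']
    rwa [Finset.insert_erase hS.2.1, Finset.insert_erase hT.2.1] at this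
  have himg : (fun S : Finset ℤ => S.erase (n:ℤ)) ''
        {S : Finset ℤ | Adm n S ∧ (n : ℤ) ∈ S ∧ (S.card : ℤ) ≤ d}
      = {S : Finset ℤ | Adm (n-1) S ∧ (S.card : ℤ) ≤ d - 1} := by
    ext T
    simp only [Set.mem_image, Set.mem_setOf_eq]
    constructor
    · rintro ⟨S, ⟨hA, hmem, hcard⟩, rfl⟩
      constructor
      · intro x hx
        have hxS : x ∈ S := Finset.mem_of_mem_erase hx
        have hxne : x ≠ (n:ℤ) := Finset.ne_of_mem_erase hx
        obtain ⟨h1, h2⟩ := hA x hxS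
        refine ⟨by rw [hcast]; omega, ?_⟩
        have hfeq : (S.erase (n:ℤ)).filter (· ≤ x) = S.filter (· ≤ x) := by
          ext y
          simp only [Finset.mem_filter, Finset.mem_erase]
          constructor
          · rintro ⟨⟨_, hy⟩, hyx⟩
            exact ⟨hy, hyx⟩
          · rintro ⟨hy, hyx⟩
            exact ⟨⟨by omega, hy⟩, hyx⟩
        rw [hfeq]
        exact h2
      · rw [Finset.card_erase_of_mem hmem]
        have hpos : 1 ≤ S.card := Finset.card_pos.2 ⟨_, hmem⟩
        push_cast [hpos]
        omega
    · rintro ⟨hA, hcard⟩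
      have hxlt : ∀ x ∈ T, x ≤ (n:ℤ) - 1 := by
        intro x hx
        have := (hA x hx).1
        rw [hcast] at this
        exact this
      have hnotT : (n:ℤ) ∉ T := fun hmem => by have := hxlt _ hmem; omega
      refine ⟨insert (n:ℤ) T, ⟨?_, Finset.mem_insert_self _ _, ?_⟩, Finset.erase_insert hnotT⟩
      · intro x hx
        rcases Finset.mem_insert.1 hx with he | hxT
        · refine ⟨le_of_eq he, ?_⟩
          have hfeq : (insert ((n:ℤ)) T).filter (· ≤ x) = insert ((n:ℤ)) T := by
            apply Finset.filter_true_of_mem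
            intro y hy
            rcases Finset.mem_insert.1 hy with rfl | hyT
            · omega
            · have := hxlt y hyT
              omega
          rw [hfeq, Finset.card_insert_of_notMem hnotT]
          push_cast
          omega
        · obtain ⟨h1, h2⟩ := hA x hxT
          refine ⟨by omega, ?_⟩
          have hfeq : (insert ((n:ℤ)) T).filter (· ≤ x) = T.filter (· ≤ x) := by
            ext y
            simp only [Finset.mem_filter, Finset.mem_insert]
            have hxn : x ≤ (n:ℤ) - 1 := hxlt x hxT
            constructor
            · rintro ⟨(rfl | hy), hyx⟩
              · omega
              · exact ⟨hy, hyx⟩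
            · rintro ⟨hy, hyx⟩
              exact ⟨Or.inr hy, hyx⟩
          rw [hfeq]
          exact h2
      · rw [Finset.card_insert_of_notMem hnotT]
        push_cast
        omega
  have h1 : {S : Finset ℤ | Adm n S ∧ (n : ℤ) ∈ S ∧ (S.card : ℤ) ≤ d}.ncard
      = {S : Finset ℤ | Adm (n-1) S ∧ (S.card : ℤ) ≤ d - 1}.ncard := by
    rw [← himg, Set.ncard_image_of_injOn hinj]
  -- disjoint union for part 3
  have hunion : {S : Finset ℤ | Adm n S ∧ (S.card : ℤ) ≤ d}
      = {S : Finset ℤ | Adm n S ∧ (n : ℤ) ∈ S ∧ (S.card : ℤ) ≤ d}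
        ∪ {S : Finset ℤ | Adm n S ∧ (n : ℤ) ∉ S ∧ (S.card : ℤ) ≤ d} := by
    ext S
    simp only [Set.mem_setOf_eq, Set.mem_union]
    tauto
  have hdisj : Disjoint {S : Finset ℤ | Adm n S ∧ (n : ℤ) ∈ S ∧ (S.card : ℤ) ≤ d}
      {S : Finset ℤ | Adm n S ∧ (n : ℤ) ∉ S ∧ (S.card : ℤ) ≤ d} := by
    rw [Set.disjoint_left]
    rintro S ⟨_, hmem, _⟩ ⟨_, hnot, _⟩
    exact hnot hmem
  have hfinA : {S : Finset ℤ | Adm n S ∧ (n : ℤ) ∈ S ∧ (S.card : ℤ) ≤ d}.Finite :=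
    aux_adm_finite n _
  have hfinB : {S : Finset ℤ | Adm n S ∧ (n : ℤ) ∉ S ∧ (S.card : ℤ) ≤ d}.Finite :=
    aux_adm_finite n _
  simp only [hrw]
  refine ⟨h1, by rw [hset2], ?_⟩
  rw [hunion, Set.ncard_union_eq hdisj hfinA hfinB, h1, hset2]
end

section
/- If w is a signed permutation of rank n whose pinnacle set is S, and either w(n-1) > max(w(n), -w(n)) or w(n-1) < min(w(n), -w(n)), then the signed permutation w' obtained from w by negating its last letter also has pinnacle set S; consequently S is an admissible pinnacle set of the type D group D_n. -/
theorem stmt9 (n : ℕ) (hn : 2 ≤ n) (w : Fin n → ℤ) (hw : IsSignedPerm n w)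
    (S : Finset ℤ) (hpin : PinSet n w = ↑S)
    (hcond :
      (w ⟨n - 1, by omega⟩ < w ⟨n - 2, by omega⟩ ∧
        -w ⟨n - 1, by omega⟩ < w ⟨n - 2, by omega⟩) ∨
      (w ⟨n - 2, by omega⟩ < w ⟨n - 1, by omega⟩ ∧
        w ⟨n - 2, by omega⟩ < -w ⟨n - 1, by omega⟩)) :
    IsSignedPerm n (Function.update w ⟨n - 1, by omega⟩ (-w ⟨n - 1, by omega⟩)) ∧
    PinSet n (Function.update w ⟨n - 1, by omega⟩ (-w ⟨n - 1, by omega⟩)) = ↑S ∧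
    APSD n S := by
  have hn1 : n - 1 < n := by omega
  have hn2 : n - 2 < n := by omega
  set j : Fin n := ⟨n - 1, hn1⟩ with hj
  set w' : Fin n → ℤ := Function.update w j (-w j) with hw'
  have hcond' : (w j < w ⟨n - 2, hn2⟩ ∧ -w j < w ⟨n - 2, hn2⟩) ∨
      (w ⟨n - 2, hn2⟩ < w j ∧ w ⟨n - 2, hn2⟩ < -w j) := hcond
  have hwj0 : w j ≠ 0 := by
    have h1 := (hw.1 j).1
    intro h; rw [h] at h1; simp at h1
  have habs : ∀ i, |w' i| = |w i| := by
    intro i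
    by_cases h : i = j
    · subst h; rw [hw', Function.update_self, abs_neg]
    · rw [hw', Function.update_of_ne h]
  have hsp' : IsSignedPerm n w' := by
    constructor
    · intro i; rw [habs]; exact hw.1 i
    · have h2 : (fun i => |w' i|) = fun i => |w i| := funext habs
      rw [h2]; exact hw.2
  have hval : ∀ (i : ℕ) (h : i < n), i ≠ n - 1 → w' ⟨i, h⟩ = w ⟨i, h⟩ := by
    intro i h hne
    rw [hw']
    exact Function.update_of_ne (by rw [hj]; exact fun he => hne (Fin.mk.injEq .. ▸ he)) _ w
  have key : ∀ (i : ℕ) (h0 : 0 < i) (h2 : i + 1 < n),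
      w' ⟨i, by omega⟩ = w ⟨i, by omega⟩ ∧
      w' ⟨i - 1, by omega⟩ = w ⟨i - 1, by omega⟩ ∧
      (w' ⟨i + 1, h2⟩ < w' ⟨i, by omega⟩ ↔ w ⟨i + 1, h2⟩ < w ⟨i, by omega⟩) := by
    intro i h0 h2
    have e1 : w' ⟨i, by omega⟩ = w ⟨i, by omega⟩ := hval i (by omega) (by omega)
    have e2 : w' ⟨i - 1, by omega⟩ = w ⟨i - 1, by omega⟩ := hval (i-1) (by omega) (by omega)
    refine ⟨e1, e2, ?_⟩
    by_cases hc : i + 1 = n - 1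
    · have hi : i = n - 2 := by omega
      have ej : (⟨i + 1, h2⟩ : Fin n) = j := by rw [hj]; exact Fin.mk_eq_mk.mpr hc
      have e3 : w' ⟨i + 1, h2⟩ = -w j := by rw [ej, hw', Function.update_self]
      have em : (⟨i, by omega⟩ : Fin n) = ⟨n - 2, hn2⟩ := Fin.mk_eq_mk.mpr hi
      have e4 : w ⟨i + 1, h2⟩ = w j := by rw [ej]
      have e5 : w ⟨i, by omega⟩ = w ⟨n - 2, hn2⟩ := by rw [em]
      rw [e1, e3, e4, e5]
      rcases hcond' with ⟨c1, c2⟩ | ⟨c1, c2⟩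
      · exact iff_of_true c2 c1
      · exact iff_of_false (asymm c2) (asymm c1)
    · have e3 : w' ⟨i + 1, h2⟩ = w ⟨i + 1, h2⟩ := hval (i+1) h2 hc
      rw [e1, e3]
  have hpin' : PinSet n w' = PinSet n w := by
    ext x
    simp only [PinSet, Set.mem_setOf_eq]
    constructor
    · rintro ⟨i, h0, h2, hx, hl, hr⟩
      obtain ⟨e1, e2, e3⟩ := key i h0 h2
      exact ⟨i, h0, h2, by rw [← e1]; exact hx, by rw [← e1, ← e2]; exact hl, e3.mp hr⟩
    · rintro ⟨i, h0, h2, hx, hl, hr⟩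
      obtain ⟨e1, e2, e3⟩ := key i h0 h2
      exact ⟨i, h0, h2, by rw [e1]; exact hx, by rw [e1, e2]; exact hl, e3.mpr hr⟩
  refine ⟨hsp', by rw [hpin']; exact hpin, ?_⟩
  by_cases hev : Even (Finset.univ.filter fun i => w i < 0).card
  · exact ⟨w, hw, hev, hpin⟩
  · refine ⟨w', hsp', ?_, by rw [hpin']; exact hpin⟩
    rcases lt_or_gt_of_ne hwj0 with hneg | hpos
    · have hset : (Finset.univ.filter fun i => w' i < 0) =
          (Finset.univ.filter fun i => w i < 0).erase j := by
        ext i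
        simp only [Finset.mem_filter, Finset.mem_erase, Finset.mem_univ, true_and]
        by_cases h : i = j
        · subst h
          rw [hw', Function.update_self]
          constructor
          · intro hlt; omega
          · rintro ⟨hne, _⟩; exact absurd rfl hne
        · rw [hw', Function.update_of_ne h]
          exact ⟨fun hlt => ⟨h, hlt⟩, fun ⟨_, hlt⟩ => hlt⟩
      have hmem : j ∈ (Finset.univ.filter fun i => w i < 0) := by
        simp only [Finset.mem_filter, Finset.mem_univ, true_and]; exact hneg
      rw [hset, Finset.card_erase_of_mem hmem]
      rcases Nat.even_or_odd (Finset.univ.filter fun i => w i < 0).card with h | h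
      · exact absurd h hev
      · obtain ⟨k, hk⟩ := h; rw [hk]; simp only [Nat.add_sub_cancel]; exact ⟨k, by omega⟩
    · have hset : (Finset.univ.filter fun i => w' i < 0) =
          insert j (Finset.univ.filter fun i => w i < 0) := by
        ext i
        simp only [Finset.mem_filter, Finset.mem_insert, Finset.mem_univ, true_and]
        by_cases h : i = j
        · subst h
          rw [hw', Function.update_self]
          constructor
          · intro _; exact Or.inl rfl
          · intro _; omega
        · rw [hw', Function.update_of_ne h]
          exact ⟨Or.inr, fun h2 => h2.resolve_left h⟩
      have hmem : j ∉ (Finset.univ.filter fun i => w i < 0) := by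
        simp only [Finset.mem_filter, Finset.mem_univ, true_and]; omega
      rw [hset, Finset.card_insert_of_notMem hmem, Nat.even_add_one]
      exact hev
end

section
/- For every k ≥ 1, the collection of admissible pinnacle sets of the hyperoctahedral group B_{2k} equals the collection of admissible pinnacle sets of the even signed permutation group D_{2k}. -/
open Finset

def Realize (X T : Finset ℤ) : Prop :=
  T ⊆ X ∧ ∀ s ∈ T,
    (T.filter (fun x => x < s)).card + 2 ≤ ((X \ T).filter (fun x => x < s)).card

lemma filter_lt_card (n r : ℕ) (hr : r < n) :
    ((Finset.univ : Finset (Fin n)).filter (fun i : Fin n => (i : ℕ) < r)).card = r := by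
  have h : (Finset.univ : Finset (Fin n)).filter (fun i : Fin n => (i : ℕ) < r)
      = Finset.Iio (⟨r, hr⟩ : Fin n) := by
    ext i
    simp [Fin.lt_def]
  rw [h, Fin.card_Iio]

lemma emb_lt_of_card_filter (U : Finset ℤ) (s : ℤ) (r : ℕ) (hr : r < U.card)
    (h : r + 1 ≤ (U.filter (fun x => x < s)).card) :
    U.orderEmbOfFin rfl ⟨r, hr⟩ < s := by
  by_contra hle
  push_neg at hle
  have hsub : U.filter (fun x => x < s) ⊆
      (Finset.univ.filter (fun i : Fin U.card => (i : ℕ) < r)).image (U.orderEmbOfFin rfl) := by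
    intro x hx
    rw [mem_filter] at hx
    obtain ⟨i, hi⟩ : ∃ i, U.orderEmbOfFin rfl i = x := by
      have hrange := Finset.range_orderEmbOfFin U (rfl : U.card = U.card)
      have : x ∈ Set.range (U.orderEmbOfFin rfl) := by rw [hrange]; exact_mod_cast hx.1
      exact this
    refine mem_image.2 ⟨i, ?_, hi⟩
    refine mem_filter.2 ⟨mem_univ _, ?_⟩
    by_contra hir
    push_neg at hir
    have h1 : U.orderEmbOfFin rfl ⟨r, hr⟩ ≤ U.orderEmbOfFin rfl i :=
      (U.orderEmbOfFin rfl).monotone (by simp [Fin.le_def]; omega)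
    have h2 : x < s := hx.2
    rw [hi] at h1
    linarith
  have hcard := (card_le_card hsub).trans (card_image_le)
  rw [filter_lt_card _ r hr] at hcard
  omega

lemma count_lt_emb (T : Finset ℤ) (j : Fin T.card) :
    (T.filter (fun x => x < T.orderEmbOfFin rfl j)).card = (j : ℕ) := by
  have heq : T.filter (fun x => x < T.orderEmbOfFin rfl j)
      = (Finset.univ.filter (fun i : Fin T.card => (i : ℕ) < (j : ℕ))).image
          (T.orderEmbOfFin rfl) := by
    ext x
    constructor
    · intro hx
      rw [mem_filter] at hx
      obtain ⟨i, hi⟩ : ∃ i, T.orderEmbOfFin rfl i = x := by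
        have hrange := Finset.range_orderEmbOfFin T (rfl : T.card = T.card)
        have : x ∈ Set.range (T.orderEmbOfFin rfl) := by rw [hrange]; exact_mod_cast hx.1
        exact this
      refine mem_image.2 ⟨i, mem_filter.2 ⟨mem_univ _, ?_⟩, hi⟩
      have hlt : T.orderEmbOfFin rfl i < T.orderEmbOfFin rfl j := by rw [hi]; exact hx.2
      exact Fin.lt_def.1 ((T.orderEmbOfFin rfl).lt_iff_lt.1 hlt)
    · intro hx
      obtain ⟨i, hi, rfl⟩ := mem_image.1 hx
      rw [mem_filter] at hi
      refine mem_filter.2 ⟨Finset.orderEmbOfFin_mem _ _ _, ?_⟩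
      exact (T.orderEmbOfFin rfl).lt_iff_lt.2 (Fin.lt_def.2 hi.2)
  rw [heq, card_image_of_injective _ (T.orderEmbOfFin rfl).injective,
    filter_lt_card _ _ j.2]

def buildW (U T : Finset ℤ) (n : ℕ) (hn : U.card + T.card = n) (hdm : T.card < U.card) :
    Fin n → ℤ := fun i =>
  if h1 : (i : ℕ) < 2 * T.card ∧ (i : ℕ) % 2 = 1 then
    T.orderEmbOfFin rfl ⟨(i : ℕ) / 2, by omega⟩
  else if h2 : (i : ℕ) < 2 * T.card then
    U.orderEmbOfFin rfl ⟨(i : ℕ) / 2, by omega⟩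
  else
    U.orderEmbOfFin rfl ⟨(i : ℕ) - T.card, by have := i.isLt; omega⟩

lemma buildW_odd (U T : Finset ℤ) (n : ℕ) (hn : U.card + T.card = n) (hdm : T.card < U.card)
    (i : Fin n) (j : ℕ) (hj : j < T.card) (h : (i : ℕ) = 2 * j + 1) :
    buildW U T n hn hdm i = T.orderEmbOfFin rfl ⟨j, hj⟩ := by
  rw [buildW, dif_pos ⟨by omega, by omega⟩]
  congr 1
  apply Fin.ext
  simp only [Fin.val_mk]
  omega

lemma buildW_even (U T : Finset ℤ) (n : ℕ) (hn : U.card + T.card = n) (hdm : T.card < U.card)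
    (i : Fin n) (j : ℕ) (hj : j < T.card) (h : (i : ℕ) = 2 * j) :
    buildW U T n hn hdm i = U.orderEmbOfFin rfl ⟨j, by omega⟩ := by
  rw [buildW, dif_neg (by omega), dif_pos (by omega)]
  congr 1
  apply Fin.ext
  simp only [Fin.val_mk]
  omega

lemma buildW_tail (U T : Finset ℤ) (n : ℕ) (hn : U.card + T.card = n) (hdm : T.card < U.card)
    (i : Fin n) (r : ℕ) (hr : r < U.card) (hr2 : T.card ≤ r) (h : (i : ℕ) = r + T.card) :
    buildW U T n hn hdm i = U.orderEmbOfFin rfl ⟨r, hr⟩ := by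
  rw [buildW, dif_neg (by omega), dif_neg (by omega)]
  congr 1
  apply Fin.ext
  simp only [Fin.val_mk]
  omega

lemma suff (n : ℕ) (X T : Finset ℤ) (hcard : X.card = n) (hR : Realize X T) :
    ∃ w : Fin n → ℤ, Function.Injective w ∧ (∀ i, w i ∈ X) ∧ PinSet n w = ↑T := by
  classical
  obtain ⟨hTX, hcnt⟩ := hR
  have hn : (X \ T).card + T.card = n := by
    rw [card_sdiff_add_card_eq_card hTX, hcard]
  set U := X \ T with hU
  have hUX : U ⊆ X := sdiff_subset
  by_cases hd0 : T.card = 0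
  · have hT : T = ∅ := card_eq_zero.1 hd0
    refine ⟨fun i => X.orderEmbOfFin hcard i, fun a b hab => (X.orderEmbOfFin hcard).injective hab,
      fun i => orderEmbOfFin_mem _ _ _, ?_⟩
    rw [hT]
    ext x
    simp only [coe_empty, Set.mem_empty_iff_false, iff_false, PinSet, Set.mem_setOf_eq]
    rintro ⟨i, h0, h2, hx, hl, hr⟩
    have hlt : (⟨i, by omega⟩ : Fin n) < ⟨i + 1, h2⟩ := by simp [Fin.lt_def]
    have := (X.orderEmbOfFin hcard).strictMono hlt
    linarith
  · have key : ∀ j : Fin T.card,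
        (j : ℕ) + 2 ≤ (U.filter (fun x => x < T.orderEmbOfFin rfl j)).card := by
      intro j
      have := hcnt _ (orderEmbOfFin_mem T rfl j)
      rwa [count_lt_emb] at this
    have hfle : ∀ j : Fin T.card, (j : ℕ) + 2 ≤ U.card := fun j =>
      le_trans (key j) (card_le_card (filter_subset _ _))
    have hdm : T.card < U.card := by
      have := hfle ⟨T.card - 1, by omega⟩
      simp only [Fin.val_mk] at this
      omega
    have hult : ∀ (j : Fin T.card) (r : ℕ) (hrj : r ≤ (j : ℕ) + 1) (hrm : r < U.card),
        U.orderEmbOfFin rfl ⟨r, hrm⟩ < T.orderEmbOfFin rfl j := fun j r hrj hrm =>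
      emb_lt_of_card_filter U _ r hrm (le_trans (by omega) (key j))
    have humono : ∀ (r s : ℕ) (hr : r < U.card) (hs : s < U.card), r < s →
        U.orderEmbOfFin rfl ⟨r, hr⟩ < U.orderEmbOfFin rfl ⟨s, hs⟩ := fun r s hr hs hrs =>
      (U.orderEmbOfFin rfl).strictMono (by simp [Fin.lt_def]; omega)
    set w := buildW U T n hn hdm with hwdef
    have h2dn : 2 * T.card < n := by omega
    have hw : ∀ i : Fin n,
        (∃ j, ∃ hj : j < T.card, (i : ℕ) = 2 * j + 1 ∧ w i = T.orderEmbOfFin rfl ⟨j, hj⟩) ∨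
        (∃ r, ∃ hr : r < U.card, w i = U.orderEmbOfFin rfl ⟨r, hr⟩ ∧
          (((i : ℕ) < 2 * T.card ∧ (i : ℕ) = 2 * r) ∨
            (2 * T.card ≤ (i : ℕ) ∧ (i : ℕ) = r + T.card))) := by
      intro i
      rcases Nat.lt_or_ge (i : ℕ) (2 * T.card) with hlt | hge
      · rcases Nat.even_or_odd (i : ℕ) with he | ho
        · obtain ⟨j, hj⟩ := he
          right
          exact ⟨j, by omega, buildW_even U T n hn hdm i j (by omega) (by omega),
            Or.inl ⟨hlt, by omega⟩⟩
        · obtain ⟨j, hj⟩ := ho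
          exact Or.inl ⟨j, by omega, by omega,
            buildW_odd U T n hn hdm i j (by omega) (by omega)⟩
      · right
        exact ⟨(i : ℕ) - T.card, by have := i.isLt; omega,
          buildW_tail U T n hn hdm i _ (by have := i.isLt; omega) (by omega) (by omega),
          Or.inr ⟨hge, by omega⟩⟩
    have hTU : ∀ x ∈ T, ∀ y ∈ U, x ≠ y := by
      intro x hx y hy
      rw [hU, mem_sdiff] at hy
      exact fun h => hy.2 (h ▸ hx)
    refine ⟨w, ?_, ?_, ?_⟩
    · intro a b hab
      rcases hw a with ⟨j1, hj1, ha1, hv1⟩ | ⟨r1, hr1, hv1, hp1⟩ <;>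
        rcases hw b with ⟨j2, hj2, hb1, hv2⟩ | ⟨r2, hr2, hv2, hp2⟩
      · rw [hv1, hv2] at hab
        have := (T.orderEmbOfFin rfl).injective hab
        have : j1 = j2 := by simpa [Fin.ext_iff] using this
        exact Fin.ext (by omega)
      · rw [hv1, hv2] at hab
        exact absurd hab (hTU _ (orderEmbOfFin_mem _ _ _) _ (orderEmbOfFin_mem _ _ _))
      · rw [hv1, hv2] at hab
        exact absurd hab.symm (hTU _ (orderEmbOfFin_mem _ _ _) _ (orderEmbOfFin_mem _ _ _))
      · rw [hv1, hv2] at hab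
        have := (U.orderEmbOfFin rfl).injective hab
        have : r1 = r2 := by simpa [Fin.ext_iff] using this
        apply Fin.ext
        omega
    · intro i
      rcases hw i with ⟨j, hj, _, hv⟩ | ⟨r, hr, hv, _⟩
      · rw [hv]; exact hTX (orderEmbOfFin_mem _ _ _)
      · rw [hv]; exact hUX (orderEmbOfFin_mem _ _ _)
    · ext x
      simp only [PinSet, Set.mem_setOf_eq, mem_coe]
      constructor
      · rintro ⟨i, h0, h2, hx, hl, hr⟩
        rcases Nat.lt_or_ge i (2 * T.card) with hlt | hge
        · rcases Nat.even_or_odd i with he | ho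
          · obtain ⟨j, hj⟩ := he
            exfalso
            rw [hwdef] at hr
            rw [buildW_even U T n hn hdm ⟨i, by omega⟩ j (by omega) (by simp; omega),
              buildW_odd U T n hn hdm ⟨i + 1, h2⟩ j (by omega) (by simp; omega)] at hr
            have := hult ⟨j, by omega⟩ j (by simp only [Fin.val_mk]; omega) (by omega)
            linarith
          · obtain ⟨j, hj⟩ := ho
            rw [hwdef] at hx
            rw [buildW_odd U T n hn hdm ⟨i, by omega⟩ j (by omega) (by simp; omega)] at hx
            rw [← hx]
            exact orderEmbOfFin_mem _ _ _
        · exfalso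
          rw [hwdef] at hr
          rw [buildW_tail U T n hn hdm ⟨i, by omega⟩ (i - T.card) (by omega) (by omega) (by simp; omega),
            buildW_tail U T n hn hdm ⟨i + 1, h2⟩ (i + 1 - T.card) (by omega) (by omega)
              (by simp; omega)] at hr
          have := humono (i - T.card) (i + 1 - T.card) (by omega) (by omega) (by omega)
          linarith
      · intro hx
        obtain ⟨j, hj⟩ : ∃ j, T.orderEmbOfFin rfl j = x := by
          have hrange := Finset.range_orderEmbOfFin T (rfl : T.card = T.card)
          have : x ∈ Set.range (T.orderEmbOfFin rfl) := by rw [hrange]; exact_mod_cast hx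
          exact this
        have hjd : (j : ℕ) < T.card := j.isLt
        have hjm2 : (j : ℕ) + 2 ≤ U.card := hfle j
        refine ⟨2 * (j : ℕ) + 1, by omega, by omega, ?_, ?_, ?_⟩
        · rw [hwdef, buildW_odd U T n hn hdm _ (j : ℕ) hjd (by simp)]
          rw [show (⟨(j : ℕ), hjd⟩ : Fin T.card) = j from Fin.ext rfl, hj]
        · rw [hwdef]
          rw [buildW_even U T n hn hdm ⟨2 * (j : ℕ) + 1 - 1, by omega⟩ (j : ℕ) hjd
              (by simp),
            buildW_odd U T n hn hdm ⟨2 * (j : ℕ) + 1, by omega⟩ (j : ℕ) hjd (by simp)]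
          exact hult ⟨(j : ℕ), hjd⟩ (j : ℕ) (by simp only [Fin.val_mk]; omega) (by omega)
        · rw [hwdef]
          have hval : buildW U T n hn hdm ⟨2 * (j : ℕ) + 1 + 1, by omega⟩ =
              U.orderEmbOfFin rfl ⟨(j : ℕ) + 1, by omega⟩ := by
            rcases Nat.lt_or_ge (2 * (j : ℕ) + 2) (2 * T.card) with hlt2 | hge2
            · exact buildW_even U T n hn hdm _ ((j : ℕ) + 1) (by omega) (by simp; omega)
            · exact buildW_tail U T n hn hdm _ ((j : ℕ) + 1) (by omega) (by omega) (by simp; omega)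
          rw [hval, buildW_odd U T n hn hdm ⟨2 * (j : ℕ) + 1, by omega⟩ (j : ℕ) hjd (by simp)]
          exact hult ⟨(j : ℕ), j.isLt⟩ ((j : ℕ) + 1) (by simp only [Fin.val_mk]; omega) (by omega)


lemma nec (n : ℕ) (w : Fin n → ℤ) (hinj : Function.Injective w) (S : Finset ℤ)
    (hpin : PinSet n w = ↑S) : Realize (Finset.univ.image w) S := by
  classical
  set X := Finset.univ.image w with hX
  set wn : ℕ → ℤ := fun a => if h : a < n then w ⟨a, h⟩ else 0 with hwn
  have hwn_eq : ∀ (a : ℕ) (h : a < n), wn a = w ⟨a, h⟩ := fun a h => dif_pos h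
  -- membership of S in PinSet, unpacked in terms of wn
  have hSpin : ∀ t ∈ S, ∃ p : ℕ, 0 < p ∧ p + 1 < n ∧ wn p = t ∧
      wn (p - 1) < wn p ∧ wn (p + 1) < wn p := by
    intro t ht
    have : t ∈ PinSet n w := by rw [hpin]; exact_mod_cast ht
    obtain ⟨i, h0, h2, hval, hl, hr⟩ := this
    exact ⟨i, h0, h2, by rw [hwn_eq i (by omega)]; exact hval,
      by rw [hwn_eq (i-1) (by omega), hwn_eq i (by omega)]; exact hl,
      by rw [hwn_eq (i+1) (by omega), hwn_eq i (by omega)]; exact hr⟩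
  -- pinnacle positions are where S values sit
  have hpin2 : ∀ a : ℕ, a < n → wn a ∈ S →
      0 < a ∧ a + 1 < n ∧ wn (a - 1) < wn a ∧ wn (a + 1) < wn a := by
    intro a ha haS
    have : wn a ∈ PinSet n w := by rw [hpin]; exact_mod_cast haS
    obtain ⟨i, h0, h2, hval, hl, hr⟩ := this
    have hia : i = a := by
      have : w ⟨i, by omega⟩ = w ⟨a, ha⟩ := by rw [hval, hwn_eq a ha]
      have := hinj this
      simpa [Fin.ext_iff] using this
    subst hia
    exact ⟨h0, h2, by rw [hwn_eq (i-1) (by omega), hwn_eq i (by omega)]; exact hl,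
      by rw [hwn_eq (i+1) (by omega), hwn_eq i (by omega)]; exact hr⟩
  have hSX : S ⊆ X := by
    intro t ht
    obtain ⟨p, hp0, hp1, hval, _, _⟩ := hSpin t ht
    rw [hX]
    exact mem_image.2 ⟨⟨p, by omega⟩, mem_univ _, by rw [← hwn_eq p (by omega)]; exact hval⟩
  refine ⟨hSX, ?_⟩
  intro s hs
  -- the set of pinnacle values ≤ s
  set F : Finset ℤ := S.filter (fun x => x ≤ s) with hF
  have hsF : s ∈ F := mem_filter.2 ⟨hs, le_refl s⟩
  set pos : ℤ → ℕ := fun t => if ht : t ∈ S then (hSpin t ht).choose else 0 with hposdef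
  have hpos : ∀ t ∈ S, 0 < pos t ∧ pos t + 1 < n ∧ wn (pos t) = t ∧
      wn (pos t - 1) < wn (pos t) ∧ wn (pos t + 1) < wn (pos t) := by
    intro t ht
    rw [hposdef]
    simp only [dif_pos ht]
    exact (hSpin t ht).choose_spec
  set P : Finset ℕ := F.image pos with hP
  have hposinj : Set.InjOn pos F := by
    intro t ht t' ht' hpp
    have h1 := (hpos t (mem_filter.1 ht).1).2.2.1
    have h2 := (hpos t' (mem_filter.1 ht').1).2.2.1
    rw [← h1, ← h2, hpp]
  have hPcard : P.card = F.card := card_image_of_injOn hposinj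
  have hPne : P.Nonempty := ⟨pos s, mem_image.2 ⟨s, hsF, rfl⟩⟩
  set q := P.max' hPne with hq
  -- facts about members of P
  have hPmem : ∀ p ∈ P, ∃ t ∈ S, t ≤ s ∧ pos t = p := by
    intro p hp
    obtain ⟨t, ht, rfl⟩ := mem_image.1 hp
    exact ⟨t, (mem_filter.1 ht).1, (mem_filter.1 ht).2, rfl⟩
  have hPprop : ∀ p ∈ P, 0 < p ∧ p + 1 < n ∧ wn p ≤ s ∧
      wn (p - 1) < wn p ∧ wn (p + 1) < wn p := by
    intro p hp
    obtain ⟨t, ht, hts, hpt⟩ := hPmem p hp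
    obtain ⟨a1, a2, a3, a4, a5⟩ := hpos t ht
    rw [hpt] at a1 a2 a3 a4 a5
    exact ⟨a1, a2, by rw [a3]; exact hts, a4, a5⟩
  set A : Finset ℕ := P.image (fun p => p - 1) ∪ {q + 1} with hA
  have hAcard : A.card = F.card + 1 := by
    rw [hA, card_union_of_disjoint, card_image_of_injOn, hPcard, card_singleton]
    · intro p hp p' hp' hee
      have e1 := (hPprop p hp).1
      have e2 := (hPprop p' hp').1
      have hee' : p - 1 = p' - 1 := hee
      omega
    · rw [disjoint_singleton_right]
      intro hmem
      obtain ⟨p, hp, hpe⟩ := mem_image.1 hmem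
      have h1 := (hPprop p hp).1
      have h2 : p ≤ q := le_max' _ _ hp
      omega
  -- each element of A maps into the target filter set
  have hAprop : ∀ a ∈ A, a < n ∧ wn a < s ∧ wn a ∉ S := by
    intro a ha
    rw [hA, mem_union] at ha
    have key : a + 1 < n ∧ wn a < wn (a + 1) ∧ wn (a + 1) ≤ s ∨
        0 < a ∧ a < n ∧ wn a < wn (a - 1) ∧ wn (a - 1) ≤ s := by
      rcases ha with ha | ha
      · obtain ⟨p, hp, hpe⟩ := mem_image.1 ha
        obtain ⟨b1, b2, b3, b4, b5⟩ := hPprop p hp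
        left
        rw [show a + 1 = p from by omega]
        rw [hpe] at b4
        exact ⟨by omega, b4, b3⟩
      · have haq : a = q + 1 := by simpa using ha
        obtain ⟨b1, b2, b3, b4, b5⟩ := hPprop q (max'_mem _ _)
        right
        rw [haq]
        rw [show q + 1 - 1 = q from by omega]
        exact ⟨by omega, by omega, b5, b3⟩
    rcases key with ⟨k1, k2, k3⟩ | ⟨k1, k1', k2, k3⟩
    · refine ⟨by omega, by linarith, ?_⟩
      intro habs
      obtain ⟨c1, c2, c3, c4⟩ := hpin2 a (by omega) habs
      linarith
    · refine ⟨k1', by linarith, ?_⟩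
      intro habs
      obtain ⟨c1, c2, c3, c4⟩ := hpin2 a k1' habs
      linarith
  have hsub : A.image wn ⊆ (X \ S).filter (fun x => x < s) := by
    intro x hx
    obtain ⟨a, ha, rfl⟩ := mem_image.1 hx
    obtain ⟨c1, c2, c3⟩ := hAprop a ha
    refine mem_filter.2 ⟨mem_sdiff.2 ⟨?_, c3⟩, c2⟩
    rw [hX]
    exact mem_image.2 ⟨⟨a, c1⟩, mem_univ _, (hwn_eq a c1).symm⟩
  have hwninj : Set.InjOn wn A := by
    intro a ha b hb he
    have ha' := (hAprop a ha).1
    have hb' := (hAprop b hb).1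
    rw [hwn_eq a ha', hwn_eq b hb'] at he
    have := hinj he
    simpa [Fin.ext_iff] using this
  have hcount : F.card + 1 ≤ ((X \ S).filter (fun x => x < s)).card := by
    calc F.card + 1 = A.card := hAcard.symm
    _ = (A.image wn).card := (card_image_of_injOn hwninj).symm
    _ ≤ _ := card_le_card hsub
  have hFdecomp : F.card = (S.filter (fun x => x < s)).card + 1 := by
    have : F = insert s (S.filter (fun x => x < s)) := by
      rw [hF]
      ext t
      simp only [mem_filter, mem_insert]
      constructor
      · rintro ⟨h1, h2⟩
        rcases eq_or_lt_of_le h2 with h | h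
        · exact Or.inl h
        · exact Or.inr ⟨h1, h⟩
      · rintro (rfl | ⟨h1, h2⟩)
        · exact ⟨hs, le_refl _⟩
        · exact ⟨h1, le_of_lt h2⟩
    rw [this, card_insert_of_notMem (by simp)]
  omega


lemma flipX (n : ℕ) (hn : Even n) (X T : Finset ℤ) (hcard : X.card = n) (hR : Realize X T)
    (habs : ∀ x ∈ X, ∀ y ∈ X, |x| = |y| → x = y)
    (hbnd : ∀ x ∈ X, 1 ≤ |x| ∧ |x| ≤ (n : ℤ))
    (hodd : ¬ Even (X.filter (fun x => x < 0)).card) :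
    ∃ X' : Finset ℤ, Realize X' T ∧ X'.card = n ∧
      (∀ x ∈ X', ∀ y ∈ X', |x| = |y| → x = y) ∧
      (∀ x ∈ X', 1 ≤ |x| ∧ |x| ≤ (n : ℤ)) ∧
      Even (X'.filter (fun x => x < 0)).card := by
  classical
  obtain ⟨hTX, hcnt⟩ := hR
  have hXTne : (X \ T).Nonempty := by
    rcases T.eq_empty_or_nonempty with rfl | ⟨t, ht⟩
    · rw [sdiff_empty]
      have hne : (X.filter (fun x => x < 0)).Nonempty := by
        rw [nonempty_iff_ne_empty]
        intro h
        rw [h] at hodd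
        exact hodd (by simp)
      obtain ⟨x, hx⟩ := hne
      exact ⟨x, (mem_filter.1 hx).1⟩
    · have := hcnt t ht
      have hpos : 0 < ((X \ T).filter (fun x => x < t)).card := by omega
      obtain ⟨x, hx⟩ := card_pos.1 hpos
      exact ⟨x, (mem_filter.1 hx).1⟩
  have hnz : ∀ x ∈ X, x ≠ 0 := by
    intro x hx h
    have := (hbnd x hx).1
    rw [h] at this
    simp at this
  have hnv : ∀ v ∈ X, -v ∉ X := by
    intro v hv h
    have := habs v hv (-v) h (by simp)
    have := hnz v hv
    omega
  have hsd : ∀ v ∈ X \ T,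
      (insert (-v) (X.erase v)) \ T = insert (-v) ((X \ T).erase v) := by
    intro v hv
    have hvX := (mem_sdiff.1 hv).1
    have hnvT : -v ∉ T := fun h => hnv v hvX (hTX h)
    ext x
    simp only [mem_sdiff, mem_insert, mem_erase]
    constructor
    · rintro ⟨h1 | ⟨h2, h3⟩, h4⟩
      · exact Or.inl h1
      · exact Or.inr ⟨h2, h3, h4⟩
    · rintro (rfl | ⟨h1, h2, h3⟩)
      · exact ⟨Or.inl rfl, hnvT⟩
      · exact ⟨Or.inr ⟨h1, h2⟩, h3⟩
  have main : ∀ v ∈ X \ T, (∀ s ∈ T, (T.filter (fun x => x < s)).card + 2 ≤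
        (((insert (-v) (X.erase v)) \ T).filter (fun x => x < s)).card) →
      ∃ X' : Finset ℤ, Realize X' T ∧ X'.card = n ∧
        (∀ x ∈ X', ∀ y ∈ X', |x| = |y| → x = y) ∧
        (∀ x ∈ X', 1 ≤ |x| ∧ |x| ≤ (n : ℤ)) ∧
        Even (X'.filter (fun x => x < 0)).card := by
    intro v hv hcnt'
    have hvX : v ∈ X := (mem_sdiff.1 hv).1
    have hvT : v ∉ T := (mem_sdiff.1 hv).2
    have hv0 : v ≠ 0 := hnz v hvX
    have hnvX : -v ∉ X := hnv v hvX
    set X' := insert (-v) (X.erase v) with hX'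
    have hX1 : 1 ≤ X.card := card_pos.2 ⟨v, hvX⟩
    have hcard' : X'.card = n := by
      rw [hX', card_insert_of_notMem (fun h => hnvX (erase_subset _ _ h)),
        card_erase_of_mem hvX]
      omega
    have hTX' : T ⊆ X' := by
      intro t ht
      rw [hX', mem_insert]
      exact Or.inr (mem_erase.2 ⟨fun h => hvT (h ▸ ht), hTX ht⟩)
    have habs' : ∀ x ∈ X', ∀ y ∈ X', |x| = |y| → x = y := by
      intro x hx y hy hxy
      rw [hX', mem_insert] at hx hy
      rcases hx with rfl | hx <;> rcases hy with rfl | hy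
      · rfl
      · exfalso
        have h1 : |y| = |v| := by rw [← hxy]; simp
        have := habs y (mem_of_mem_erase hy) v hvX h1
        exact (mem_erase.1 hy).1 this
      · exfalso
        have h1 : |x| = |v| := by rw [hxy]; simp
        have := habs x (mem_of_mem_erase hx) v hvX h1
        exact (mem_erase.1 hx).1 this
      · exact habs x (mem_of_mem_erase hx) y (mem_of_mem_erase hy) hxy
    have hbnd' : ∀ x ∈ X', 1 ≤ |x| ∧ |x| ≤ (n : ℤ) := by
      intro x hx
      rw [hX', mem_insert] at hx
      rcases hx with rfl | hx
      · have := hbnd v hvX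
        rw [abs_neg]
        exact this
      · exact hbnd x (mem_of_mem_erase hx)
    have hpar : Even (X'.filter (fun x => x < 0)).card := by
      have heq : X'.filter (fun x => x < 0)
          = if (-v : ℤ) < 0 then insert (-v) ((X.filter (fun x => x < 0)).erase v)
            else (X.filter (fun x => x < 0)).erase v := by
        rw [hX', filter_insert, filter_erase]
      have hXf1 : 1 ≤ (X.filter (fun x => x < 0)).card ∨
          v ∉ X.filter (fun x => x < 0) := by
        by_cases h : v ∈ X.filter (fun x => x < 0)
        · exact Or.inl (card_pos.2 ⟨v, h⟩)
        · exact Or.inr h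
      rw [Nat.even_iff]
      rw [Nat.not_even_iff] at hodd
      rcases lt_trichotomy v 0 with hvneg | hvz | hvpos
      · -- v negative, -v positive : count decreases by one
        have hvmem : v ∈ X.filter (fun x => x < 0) := mem_filter.2 ⟨hvX, hvneg⟩
        rw [heq, if_neg (by omega), card_erase_of_mem hvmem]
        have : 1 ≤ (X.filter (fun x => x < 0)).card := card_pos.2 ⟨v, hvmem⟩
        omega
      · exact absurd hvz hv0
      · have hvmem : v ∉ X.filter (fun x => x < 0) := by
          intro h
          have := (mem_filter.1 h).2
          omega
        rw [heq, if_pos (by omega), erase_eq_of_notMem hvmem,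
          card_insert_of_notMem (fun h => hnvX ((filter_subset _ _) h))]
        omega
    exact ⟨X', ⟨hTX', hcnt'⟩, hcard', habs', hbnd', hpar⟩
  by_cases hpos : ∃ v ∈ X \ T, 0 < v
  · obtain ⟨v, hv, hv0⟩ := hpos
    refine main v hv ?_
    intro s hs
    have hold := hcnt s hs
    rw [hsd v hv, filter_insert, filter_erase]
    have hnvB : -v ∉ ((X \ T).filter (fun x => x < s)).erase v :=
      fun h => hnv v (mem_sdiff.1 hv).1 ((sdiff_subset) ((filter_subset _ _) (mem_of_mem_erase h)))
    by_cases hnvs : -v < s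
    · rw [if_pos hnvs, card_insert_of_notMem hnvB]
      by_cases hvs : v < s
      · have hvmem : v ∈ (X \ T).filter (fun x => x < s) := mem_filter.2 ⟨hv, hvs⟩
        rw [card_erase_of_mem hvmem]
        have : 1 ≤ ((X \ T).filter (fun x => x < s)).card := card_pos.2 ⟨v, hvmem⟩
        omega
      · rw [erase_eq_of_notMem
          (show v ∉ (X \ T).filter (fun x => x < s) from fun h => hvs (mem_filter.1 h).2)]
        omega
    · rw [if_neg hnvs]
      have hvs : ¬ v < s := by
        intro h
        exact hnvs (by omega)
      rw [erase_eq_of_notMem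
        (show v ∉ (X \ T).filter (fun x => x < s) from fun h => hvs (mem_filter.1 h).2)]
      omega
  · -- all elements of X \ T are negative
    push_neg at hpos
    have hneg : ∀ x ∈ X \ T, x < 0 := by
      intro x hx
      have h1 := hpos x hx
      have h2 := hnz x ((sdiff_subset) hx)
      omega
    set v := (X \ T).max' hXTne with hvdef
    have hvmem : v ∈ X \ T := max'_mem _ _
    have hvneg : v < 0 := hneg v hvmem
    have hvX : v ∈ X := (mem_sdiff.1 hvmem).1
    refine main v hvmem ?_
    intro s hs
    have hold := hcnt s hs
    have hsX : s ∈ X := hTX hs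
    have hsnv : s ≠ -v := fun h => hnv v hvX (h ▸ hsX)
    have hsv : s ≠ v := fun h => (mem_sdiff.1 hvmem).2 (h ▸ hs)
    -- abbreviations
    have hmn : (X \ T).card + T.card = n := by
      rw [card_sdiff_add_card_eq_card hTX, hcard]
    have hTne : T.Nonempty := ⟨s, hs⟩
    set tmax := T.max' hTne with htmaxdef
    have htmaxmem : tmax ∈ T := max'_mem _ _
    have hfiltmax : T.filter (fun x => x < tmax) = T.erase tmax := by
      ext t
      simp only [mem_filter, mem_erase]
      constructor
      · rintro ⟨h1, h2⟩
        exact ⟨fun h => by omega, h1⟩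
      · rintro ⟨h1, h2⟩
        have := le_max' T t h2
        rw [← htmaxdef] at this
        exact ⟨h2, lt_of_le_of_ne this h1⟩
    have hTd1 : 1 ≤ T.card := card_pos.2 hTne
    have hmd : T.card + 1 ≤ (X \ T).card := by
      have h1 := hcnt tmax htmaxmem
      have h2 : ((X \ T).filter (fun x => x < tmax)).card ≤ (X \ T).card :=
        card_le_card (filter_subset _ _)
      rw [hfiltmax, card_erase_of_mem htmaxmem] at h1
      omega
    have hnmod : n % 2 = 0 := Nat.even_iff.1 hn
    rw [hsd v hvmem, filter_insert, filter_erase]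
    have hnvB : -v ∉ ((X \ T).filter (fun x => x < s)).erase v :=
      fun h => hnv v hvX ((sdiff_subset) ((filter_subset _ _) (mem_of_mem_erase h)))
    rcases lt_trichotomy s v with hslt | hseq | hsgt
    · -- s < v : nothing changes
      rw [if_neg (by omega)]
      rw [erase_eq_of_notMem (show v ∉ (X \ T).filter (fun x => x < s) from
        fun h => by have := (mem_filter.1 h).2; omega)]
      omega
    · exact absurd hseq hsv
    · by_cases hsnvlt : -v < s
      · -- s > -v : one removed, one added
        have hvmem' : v ∈ (X \ T).filter (fun x => x < s) := mem_filter.2 ⟨hvmem, by omega⟩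
        rw [if_pos hsnvlt, card_insert_of_notMem hnvB, card_erase_of_mem hvmem']
        have : 1 ≤ ((X \ T).filter (fun x => x < s)).card := card_pos.2 ⟨v, hvmem'⟩
        omega
      · -- v < s < -v : the hard case
        have hsltnv : s < -v := by
          rcases lt_trichotomy s (-v) with h | h | h
          · exact h
          · exact absurd h hsnv
          · exact absurd (by omega : -v < s) hsnvlt
        have hfull : (X \ T).filter (fun x => x < s) = X \ T := by
          apply filter_true_of_mem
          intro x hx
          have := le_max' (X \ T) x hx
          rw [← hvdef] at this
          omega
        have hvmem' : v ∈ (X \ T).filter (fun x => x < s) := mem_filter.2 ⟨hvmem, by omega⟩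
        rw [if_neg hsnvlt, card_erase_of_mem hvmem', hfull]
        -- need : (T.filter (< s)).card + 2 ≤ (X \ T).card - 1
        by_cases hstmax : s = tmax
        · -- m ≥ d + 2 by parity
          rw [hstmax, hfiltmax, card_erase_of_mem htmaxmem]
          omega
        · -- (T.filter (< s)).card ≤ d - 2
          have hsub2 : T.filter (fun x => x < s) ⊆ (T.erase tmax).erase s := by
            intro t ht
            obtain ⟨ht1, ht2⟩ := mem_filter.1 ht
            have hstm : s < tmax := by
              have := le_max' T s hs
              rw [← htmaxdef] at this
              exact lt_of_le_of_ne this hstmax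
            exact mem_erase.2 ⟨by omega, mem_erase.2 ⟨by omega, ht1⟩⟩
          have hcard2 : ((T.erase tmax).erase s).card = T.card - 2 := by
            rw [card_erase_of_mem (mem_erase.2 ⟨hstmax, hs⟩), card_erase_of_mem htmaxmem]
            omega
          have := card_le_card hsub2
          omega


theorem stmt10 (k : ℕ) (hk : 1 ≤ k) :
    {S : Finset ℤ | APSB (2 * k) S} = {S : Finset ℤ | APSD (2 * k) S} := by
  ext S
  simp only [Set.mem_setOf_eq]
  constructor
  · rintro ⟨w, hsp, hpin⟩
    have hinj : Function.Injective w := fun i j h => hsp.2 (show |w i| = |w j| by rw [h])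
    set X := (Finset.univ : Finset (Fin (2 * k))).image w with hXdef
    have hcardX : X.card = 2 * k := by
      rw [hXdef, card_image_of_injective _ hinj, card_univ, Fintype.card_fin]
    have habs : ∀ x ∈ X, ∀ y ∈ X, |x| = |y| → x = y := by
      rintro x hx y hy hxy
      obtain ⟨i, _, rfl⟩ := mem_image.1 hx
      obtain ⟨j, _, rfl⟩ := mem_image.1 hy
      have := hsp.2 hxy
      rw [this]
    have hbnd : ∀ x ∈ X, 1 ≤ |x| ∧ |x| ≤ ((2 * k : ℕ) : ℤ) := by
      rintro x hx
      obtain ⟨i, _, rfl⟩ := mem_image.1 hx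
      exact hsp.1 i
    have hreal : Realize X S := nec (2 * k) w hinj S hpin
    have hnegeq : (X.filter (fun x => x < 0)).card
        = ((Finset.univ : Finset (Fin (2 * k))).filter (fun i => w i < 0)).card := by
      rw [hXdef, filter_image, card_image_of_injective _ hinj]
    by_cases hev : Even ((Finset.univ : Finset (Fin (2 * k))).filter (fun i => w i < 0)).card
    · exact ⟨w, hsp, hev, hpin⟩
    · have hodd : ¬ Even (X.filter (fun x => x < 0)).card := by
        rw [hnegeq]; exact hev
      obtain ⟨X', hreal', hcard', habs', hbnd', heven'⟩ :=
        flipX (2 * k) ⟨k, by ring⟩ X S hcardX hreal habs hbnd hodd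
      obtain ⟨w', hwinj, hwmem, hwpin⟩ := suff (2 * k) X' S hcard' hreal'
      refine ⟨w', ⟨fun i => hbnd' _ (hwmem i),
        fun i j hij => hwinj (habs' _ (hwmem i) _ (hwmem j) hij)⟩, ?_, hwpin⟩
      have himg : (Finset.univ : Finset (Fin (2 * k))).image w' = X' := by
        apply eq_of_subset_of_card_le
        · intro x hx
          obtain ⟨i, _, rfl⟩ := mem_image.1 hx
          exact hwmem i
        · rw [hcard', card_image_of_injective _ hwinj, card_univ, Fintype.card_fin]
      have hparity : ((Finset.univ : Finset (Fin (2 * k))).filter (fun i => w' i < 0)).card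
          = (X'.filter (fun x => x < 0)).card := by
        rw [← himg, filter_image, card_image_of_injective _ hwinj]
      rw [hparity]
      exact heven'
  · rintro ⟨w, hsp, _, hpin⟩
    exact ⟨w, hsp, hpin⟩
end
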